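/- arXiv:2210.06705 — 14 statements merged into one kernel-verified Lean document; each statement's English description precedes it below -/
import Mathlib

section
/- Let E be a finite-dimensional real inner product space, let F : E → ℝ and Φ : E → ℝ be differentiable with F ≥ 0 and Φ ≥ 0, and let g : ℝ → ℝ be monotone nondecreasing with g(0) = 0. Let w : [0,∞) → E be a gradient-flow trajectory of F, i.e. w is differentiable with w'(s) = −∇F(w(s)) for all s ≥ 0. If ⟨∇Φ(w(s)), ∇F(w(s))⟩ ≥ g(F(w(s))) for every s ≥ 0, then for every t > 0 one has g(F(w(t))) ≤ Φ(w(0)) / t. -/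
/-!
Along the flow, `d/ds Φ(w s) = -⟪∇Φ, ∇F⟫ ≤ -g(F(w s))`. Since `F ∘ w` is nonincreasing
(its derivative is `-‖∇F‖²`) and `g` is monotone, `g(F(w s)) ≥ g(F(w t))` for `s ≤ t`, so on
`[0, t]` the potential `Φ ∘ w` decreases at rate at least `g(F(w t))`. Hence
`t · g(F(w t)) ≤ Φ(w 0) - Φ(w t) ≤ Φ(w 0)`.
-/

open RealInnerProductSpace Set

section GradientFlow

variable {E : Type*} [NormedAddCommGroup E] [InnerProductSpace ℝ E] [CompleteSpace E]
  {F Φ : E → ℝ} {w : ℝ → E}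

theorem DifferentiableAt.hasDerivAt_comp_eq_inner_gradient {v : E} {s : ℝ}
    (hΦ : DifferentiableAt ℝ Φ (w s)) (hw : HasDerivAt w v s) :
    HasDerivAt (fun s => Φ (w s)) ⟪gradient Φ (w s), v⟫ s :=
  hΦ.hasGradientAt.hasFDerivAt.comp_hasDerivAt s hw

theorem add_mul_sub_le_of_gradient_flow {a b c : ℝ} (hab : a ≤ b) (hΦ : Differentiable ℝ Φ)
    (hw : ∀ s ∈ Icc a b, HasDerivAt w (-gradient F (w s)) s)
    (hc : ∀ s ∈ Ioo a b, c ≤ ⟪gradient Φ (w s), gradient F (w s)⟫) :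
    Φ (w b) + c * (b - a) ≤ Φ (w a) := by
  have hderiv : ∀ s ∈ Icc a b,
      HasDerivAt (fun s => Φ (w s)) (-⟪gradient Φ (w s), gradient F (w s)⟫) s := fun s hs => by
    simpa only [inner_neg_right] using (hΦ (w s)).hasDerivAt_comp_eq_inner_gradient (hw s hs)
  have hdecrease := (convex_Icc a b).image_sub_le_mul_sub_of_deriv_le
    (fun s hs => (hderiv s hs).continuousAt.continuousWithinAt)
    (fun s hs => (hderiv s (interior_subset hs)).differentiableAt.differentiableWithinAt)
    (C := -c) (fun s hs => by
      rw [interior_Icc] at hs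
      rw [(hderiv s (Ioo_subset_Icc_self hs)).deriv]
      exact neg_le_neg (hc s hs))
    a (left_mem_Icc.2 hab) b (right_mem_Icc.2 hab) hab
  linarith

theorem antitoneOn_comp_of_gradient_flow (hF : Differentiable ℝ F)
    (hw : ∀ s, 0 ≤ s → HasDerivAt w (-gradient F (w s)) s) :
    AntitoneOn (fun s => F (w s)) (Ici 0) := fun a ha b _ hab => by
  have := add_mul_sub_le_of_gradient_flow (c := 0) hab hF
    (fun s hs => hw s (le_trans ha hs.1)) (fun s _ => real_inner_self_nonneg)
  linarith

end GradientFlow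

theorem potential_to_gradient_flow_general
    {E : Type*} [NormedAddCommGroup E] [InnerProductSpace ℝ E] [FiniteDimensional ℝ E]
    (F Φ : E → ℝ) (hF : Differentiable ℝ F) (hΦ : Differentiable ℝ Φ)
    (hΦnonneg : ∀ u, 0 ≤ Φ u)
    (g : ℝ → ℝ) (hg : Monotone g)
    (w : ℝ → E)
    (hw : ∀ s : ℝ, 0 ≤ s → HasDerivAt w (-gradient F (w s)) s)
    (hadm : ∀ s : ℝ, 0 ≤ s → g (F (w s)) ≤ ⟪gradient Φ (w s), gradient F (w s)⟫) :
    ∀ t : ℝ, 0 < t → g (F (w t)) ≤ Φ (w 0) / t := by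
  intro t ht
  have hrate : ∀ s ∈ Ioo 0 t, g (F (w t)) ≤ ⟪gradient Φ (w s), gradient F (w s)⟫ :=
    fun s hs => (hg (antitoneOn_comp_of_gradient_flow hF hw hs.1.le ht.le hs.2.le)).trans
      (hadm s hs.1.le)
  have hdecrease := add_mul_sub_le_of_gradient_flow ht.le hΦ (fun s hs => hw s hs.1) hrate
  rw [le_div_iff₀ ht]
  linarith [hΦnonneg (w t)]

/-- From admissible potentials to gradient flow rates. -/
theorem potential_to_gradient_flow
    {E : Type*} [NormedAddCommGroup E] [InnerProductSpace ℝ E] [FiniteDimensional ℝ E]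
    (F Φ : E → ℝ) (hF : Differentiable ℝ F) (hΦ : Differentiable ℝ Φ)
    (hFnonneg : ∀ u, 0 ≤ F u) (hΦnonneg : ∀ u, 0 ≤ Φ u)
    (g : ℝ → ℝ) (hg : Monotone g) (hg0 : g 0 = 0)
    (w : ℝ → E)
    (hw : ∀ s : ℝ, 0 ≤ s → HasDerivAt w (-gradient F (w s)) s)
    (hadm : ∀ s : ℝ, 0 ≤ s → g (F (w s)) ≤ ⟪gradient Φ (w s), gradient F (w s)⟫) :
    ∀ t : ℝ, 0 < t → g (F (w t)) ≤ Φ (w 0) / t :=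
  potential_to_gradient_flow_general F Φ hF hΦ hΦnonneg g hg w hw hadm
end

section
/- Let E be a finite-dimensional real inner product space, F : E → ℝ differentiable, w ∈ E, and R : E × [0,∞) → ℝ a nonnegative function such that: (i) for each u, the map t ↦ R(u,t) is differentiable, nonincreasing, and tends to 0 as t → ∞; (ii) F(w) ≤ R(w,0); (iii) for each t, the map u ↦ R(u,t) is differentiable at w with gradient ∇_u R(w,t), the functions t ↦ R(w,t) and t ↦ ‖∇_u R(w,t)‖ are integrable on [0,∞), and the admissibility condition ∫₀^∞ ( ∂R(w,t)/∂t + ⟨∇_u R(w,t), ∇F(w)⟩ ) dt ≥ 0 holds; (iv) the function Φ(u) := ∫₀^∞ R(u,t) dt is differentiable at w with ∇Φ(w) = ∫₀^∞ ∇_u R(w,t) dt. Then ⟨∇Φ(w), ∇F(w)⟩ ≥ F(w). -/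
/-!
Since `R w` is antitone and tends to `0`, its derivative is nonpositive and integrable on
`[0, ∞)` with integral `-R w 0`. Splitting the admissibility integral, it therefore says
`⟪∫ G, ∇F w⟫ ≥ R w 0 ≥ F w`, and `∫ G = ∇Φ w`. The one delicate point is that splitting the
integral and exchanging it with the inner product need `G` to be integrable, hence measurable:
the components `⟪G t, v⟫` are pointwise limits of the difference quotients
`n • (R (w + n⁻¹ • v) t - R w t)` of the measurable functions `R u`.
-/

open RealInnerProductSpace MeasureTheory Filter Set Topology

section AntitoneFTC

variable {f f' : ℝ → ℝ} {a l : ℝ}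

theorem HasDerivAt.nonpos_of_antitoneOn_Ici {d x : ℝ} (hf : HasDerivAt f d x)
    (hanti : AntitoneOn f (Ici a)) (hx : a ≤ x) : d ≤ 0 :=
  hf.hasDerivWithinAt.nonpos_of_antitoneOn (uniqueDiffOn_Ici a x hx).accPt hanti

theorem integrableOn_Ici_deriv_of_antitoneOn (hf : ∀ x ∈ Ici a, HasDerivAt f (f' x) x)
    (hanti : AntitoneOn f (Ici a)) (hlim : Tendsto f atTop (𝓝 l)) :
    IntegrableOn f' (Ici a) :=
  (integrableOn_Ici_iff_integrableOn_Ioi (f := f')).2 <|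
    integrableOn_Ioi_deriv_of_nonpos' hf
      (fun x hx => (hf x hx.out.le).nonpos_of_antitoneOn_Ici hanti hx.out.le) hlim

theorem integral_Ici_deriv_of_antitoneOn (hf : ∀ x ∈ Ici a, HasDerivAt f (f' x) x)
    (hanti : AntitoneOn f (Ici a)) (hlim : Tendsto f atTop (𝓝 l)) :
    ∫ x in Ici a, f' x = l - f a := by
  rw [integral_Ici_eq_integral_Ioi]
  exact integral_Ioi_of_hasDerivAt_of_nonpos' hf
    (fun x hx => (hf x hx.out.le).nonpos_of_antitoneOn_Ici hanti hx.out.le) hlim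

end AntitoneFTC

section MeasurableGradient

variable {α E : Type*} [MeasurableSpace α] {μ : Measure α}
  [NormedAddCommGroup E] [InnerProductSpace ℝ E] [CompleteSpace E]
  {f : E → α → ℝ} {G : α → E} {w : E}

theorem aestronglyMeasurable_inner_of_hasGradientAt (hf : ∀ u, AEStronglyMeasurable (f u) μ)
    (hG : ∀ᵐ t ∂μ, HasGradientAt (fun u => f u t) (G t) w) (v : E) :
    AEStronglyMeasurable (fun t => ⟪G t, v⟫) μ := by
  refine aestronglyMeasurable_of_tendsto_ae atTop
    (f := fun (n : ℕ) t => (n : ℝ) • (f (w + (n : ℝ)⁻¹ • v) t - f w t))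
    (fun n => ((hf (w + (n : ℝ)⁻¹ • v)).sub (hf w)).const_smul (n : ℝ)) ?_
  filter_upwards [hG] with t ht
  exact ht.hasFDerivAt.lim v (tendsto_norm_atTop_atTop.comp tendsto_natCast_atTop_atTop)

theorem aestronglyMeasurable_of_hasGradientAt [FiniteDimensional ℝ E]
    (hf : ∀ u, AEStronglyMeasurable (f u) μ)
    (hG : ∀ᵐ t ∂μ, HasGradientAt (fun u => f u t) (G t) w) :
    AEStronglyMeasurable G μ := by
  let b := stdOrthonormalBasis ℝ E
  have hG_eq : G = fun t => ∑ i, ⟪G t, b i⟫ • b i := funext fun t => by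
    simp_rw [real_inner_comm (b _), b.sum_repr']
  rw [hG_eq]
  exact Finset.aestronglyMeasurable_fun_sum _ fun i _ =>
    (aestronglyMeasurable_inner_of_hasGradientAt hf hG (b i)).smul_const (b i)

end MeasurableGradient

theorem gradient_flow_to_potential_general
    {E : Type*} [NormedAddCommGroup E] [InnerProductSpace ℝ E] [FiniteDimensional ℝ E]
    (F : E → ℝ) (w : E)
    (R : E → ℝ → ℝ) (R' : E → ℝ → ℝ) (G : ℝ → E)
    (hRdiff : ∀ u : E, ∀ t : ℝ, 0 ≤ t → HasDerivAt (R u) (R' u t) t)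
    (hRanti : ∀ u : E, AntitoneOn (R u) (Set.Ici 0))
    (hRlim : ∀ u : E, Filter.Tendsto (R u) Filter.atTop (nhds 0))
    (hFw : F w ≤ R w 0)
    (hGrad : ∀ t : ℝ, 0 ≤ t → HasGradientAt (fun u => R u t) (G t) w)
    (hGint : IntegrableOn (fun t => ‖G t‖) (Set.Ici 0))
    (hadm : 0 ≤ ∫ t in Set.Ici (0 : ℝ), (R' w t + ⟪G t, gradient F w⟫))
    (hΦgrad : HasGradientAt (fun u => ∫ t in Set.Ici (0 : ℝ), R u t)
      (∫ t in Set.Ici (0 : ℝ), G t) w) :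
    F w ≤ ⟪gradient (fun u => ∫ t in Set.Ici (0 : ℝ), R u t) w, gradient F w⟫ := by
  have hR_meas : ∀ u, AEStronglyMeasurable (R u) (volume.restrict (Ici 0)) := fun u =>
    ContinuousOn.aestronglyMeasurable
      (fun t ht => (hRdiff u t ht).continuousAt.continuousWithinAt) measurableSet_Ici
  have hG_meas : AEStronglyMeasurable G (volume.restrict (Ici 0)) :=
    aestronglyMeasurable_of_hasGradientAt hR_meas
      ((ae_restrict_mem measurableSet_Ici).mono hGrad)
  have hG_int : IntegrableOn G (Ici 0) := (integrable_norm_iff hG_meas).1 hGint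
  have hR'_int : IntegrableOn (R' w) (Ici 0) :=
    integrableOn_Ici_deriv_of_antitoneOn (hRdiff w) (hRanti w) (hRlim w)
  have hinner : ∫ t in Ici (0 : ℝ), ⟪G t, gradient F w⟫ =
      ⟪∫ t in Ici (0 : ℝ), G t, gradient F w⟫ := by
    simp_rw [real_inner_comm (gradient F w)]
    exact integral_inner hG_int _
  rw [integral_add hR'_int (hG_int.inner_const _), hinner,
    integral_Ici_deriv_of_antitoneOn (hRdiff w) (hRanti w) (hRlim w)] at hadm
  rw [hΦgrad.gradient]
  linarith

/-- From admissible gradient-flow rate functions to admissible potentials: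
the potential `Φ(u) = ∫₀^∞ R(u,t) dt` satisfies `⟨∇Φ(w), ∇F(w)⟩ ≥ F(w)`. -/
theorem gradient_flow_to_potential
    {E : Type*} [NormedAddCommGroup E] [InnerProductSpace ℝ E] [FiniteDimensional ℝ E]
    (F : E → ℝ) (hF : Differentiable ℝ F) (w : E)
    (R : E → ℝ → ℝ) (R' : E → ℝ → ℝ) (G : ℝ → E)
    (hRnonneg : ∀ u : E, ∀ t : ℝ, 0 ≤ t → 0 ≤ R u t)
    (hRdiff : ∀ u : E, ∀ t : ℝ, 0 ≤ t → HasDerivAt (R u) (R' u t) t)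
    (hRanti : ∀ u : E, AntitoneOn (R u) (Set.Ici 0))
    (hRlim : ∀ u : E, Filter.Tendsto (R u) Filter.atTop (nhds 0))
    (hFw : F w ≤ R w 0)
    (hGrad : ∀ t : ℝ, 0 ≤ t → HasGradientAt (fun u => R u t) (G t) w)
    (hRint : IntegrableOn (fun t => R w t) (Set.Ici 0))
    (hGint : IntegrableOn (fun t => ‖G t‖) (Set.Ici 0))
    (hadm : 0 ≤ ∫ t in Set.Ici (0 : ℝ), (R' w t + ⟪G t, gradient F w⟫))
    (hΦgrad : HasGradientAt (fun u => ∫ t in Set.Ici (0 : ℝ), R u t)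
      (∫ t in Set.Ici (0 : ℝ), G t) w) :
    F w ≤ ⟪gradient (fun u => ∫ t in Set.Ici (0 : ℝ), R u t) w, gradient F w⟫ :=
  gradient_flow_to_potential_general F w R R' G hRdiff hRanti hRlim hFw hGrad hGint hadm hΦgrad
end

section
/- Let E be a finite-dimensional real inner product space, F : E → ℝ differentiable with F ≥ 0, and λ ≥ 0. Suppose that for every w₀ ∈ E there exists a gradient-flow trajectory w : [0,∞) → E of F with w(0) = w₀ such that F(w(t)) ≤ F(w₀)·exp(−λ t) for all t ≥ 0. Then F satisfies the Polyak–Łojasiewicz inequality: λ·F(u) ≤ ‖∇F(u)‖² for every u ∈ E. -/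
/-!
Run the gradient flow from `u`. Along it `F` decreases at rate `-‖∇F u‖²` at time `0`, while the
bound `F u * exp (-(lam * t))` touches `F ∘ w` from above at `t = 0` and decreases at rate
`-lam * F u`. A function lying below another on `[0, ∞)` and equal to it at `0` has the smaller
right derivative there, so `-‖∇F u‖² ≤ -lam * F u`.
-/

open RealInnerProductSpace

open Set in
theorem HasDerivWithinAt.le_of_eq_of_le_on_Ici {f g : ℝ → ℝ} {f' g' a : ℝ}
    (hf : HasDerivWithinAt f f' (Ici a) a) (hg : HasDerivWithinAt g g' (Ici a) a)
    (ha : f a = g a) (hle : ∀ t, a ≤ t → f t ≤ g t) : f' ≤ g' := by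
  have hmin : IsLocalMinOn (g - f) (Ici a) a :=
    IsMinOn.localize fun t ht => by simpa [ha] using hle t ht
  have hone : (1 : ℝ) ∈ posTangentConeAt (Ici a) a :=
    mem_posTangentConeAt_of_segment_subset
      ((segment_subset_Icc (by linarith)).trans Icc_subset_Ici_self)
  simpa using hmin.hasFDerivWithinAt_nonneg (hg.sub hf).hasFDerivWithinAt hone

theorem HasGradientAt.comp_hasDerivAt_inner {E : Type*} [NormedAddCommGroup E]
    [InnerProductSpace ℝ E] [CompleteSpace E] {F : E → ℝ} {w : ℝ → E} {g v : E} {t : ℝ}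
    (hF : HasGradientAt F g (w t)) (hw : HasDerivAt w v t) :
    HasDerivAt (F ∘ w) ⟪g, v⟫ t := by
  simpa using hF.hasFDerivAt.comp_hasDerivAt t hw

theorem hasDerivAt_mul_exp_neg_mul_zero (c lam : ℝ) :
    HasDerivAt (fun t => c * Real.exp (-(lam * t))) (-(lam * c)) 0 := by
  have := (((hasDerivAt_id (0 : ℝ)).const_mul lam).neg.exp).const_mul c
  simpa [mul_comm] using this

theorem gradient_flow_rate_implies_pl_general
    {E : Type*} [NormedAddCommGroup E] [InnerProductSpace ℝ E] [FiniteDimensional ℝ E]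
    (F : E → ℝ) (hF : Differentiable ℝ F)
    (lam : ℝ)
    (hrate : ∀ w₀ : E, ∃ w : ℝ → E, w 0 = w₀ ∧
      (∀ t : ℝ, 0 ≤ t → HasDerivAt w (-gradient F (w t)) t) ∧
      (∀ t : ℝ, 0 ≤ t → F (w t) ≤ F w₀ * Real.exp (-(lam * t)))) :
    ∀ u : E, lam * F u ≤ ‖gradient F u‖ ^ 2 := by
  intro u
  obtain ⟨w, hw0, hflow, hbound⟩ := hrate u
  have hdescent : HasDerivAt (F ∘ w) (-‖gradient F u‖ ^ 2) 0 := by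
    have := (hw0 ▸ (hF u).hasGradientAt).comp_hasDerivAt_inner (hflow 0 le_rfl)
    rwa [hw0, inner_neg_right, real_inner_self_eq_norm_sq] at this
  have := hdescent.hasDerivWithinAt.le_of_eq_of_le_on_Ici
    (hasDerivAt_mul_exp_neg_mul_zero (F u) lam).hasDerivWithinAt (by simp [hw0]) hbound
  linarith

/-- An exponential rate of convergence for gradient flow from every initial point
implies the Polyak–Łojasiewicz inequality. -/
theorem gradient_flow_rate_implies_pl
    {E : Type*} [NormedAddCommGroup E] [InnerProductSpace ℝ E] [FiniteDimensional ℝ E]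
    (F : E → ℝ) (hF : Differentiable ℝ F) (hFnonneg : ∀ u, 0 ≤ F u)
    (lam : ℝ) (hlam : 0 ≤ lam)
    (hrate : ∀ w₀ : E, ∃ w : ℝ → E, w 0 = w₀ ∧
      (∀ t : ℝ, 0 ≤ t → HasDerivAt w (-gradient F (w t)) t) ∧
      (∀ t : ℝ, 0 ≤ t → F (w t) ≤ F w₀ * Real.exp (-(lam * t)))) :
    ∀ u : E, lam * F u ≤ ‖gradient F u‖ ^ 2 :=
  gradient_flow_rate_implies_pl_general F hF lam hrate
end

section
/- Let E be a finite-dimensional real inner product space, F : E → ℝ differentiable with F ≥ 0, λ ≥ 0, and w* ∈ E. Suppose F is λ-linearizable with respect to w*, i.e. F(u) ≤ λ⟨∇F(u), u − w*⟩ for every u ∈ E. Then every gradient-flow trajectory w : [0,∞) → E of F satisfies, for every t > 0, F(w(t)) ≤ λ·(‖w(0) − w*‖² − ‖w(t) − w*‖²) / (2t). -/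
/-!
Along the flow, `V s = s * F (w s) + lam / 2 * ‖w s - wstar‖ ^ 2` has derivative
`F (w s) - s * ‖∇F (w s)‖ ^ 2 - lam * ⟪∇F (w s), w s - wstar⟫`, which is `≤ 0` for `s ≥ 0` by
linearizability. Hence `V t ≤ V 0`, i.e. `t * F (w t) ≤ lam / 2 * (‖w 0 - wstar‖ ^ 2 - ‖w t - wstar‖ ^ 2)`.
-/

open RealInnerProductSpace Set

theorem antitoneOn_Ici_of_hasDerivAt_nonpos {f f' : ℝ → ℝ} {a : ℝ}
    (hf : ∀ x, a ≤ x → HasDerivAt f (f' x) x) (hf' : ∀ x, a < x → f' x ≤ 0) :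
    AntitoneOn f (Ici a) := by
  refine antitoneOn_of_hasDerivWithinAt_nonpos (f' := f') (convex_Ici a)
    (fun x hx => (hf x hx).continuousAt.continuousWithinAt) (fun x hx => ?_) (fun x hx => ?_)
  all_goals rw [interior_Ici] at hx
  · exact (hf x hx.le).hasDerivWithinAt
  · exact hf' x hx

theorem HasGradientAt.comp_hasDerivAt {E : Type*} [NormedAddCommGroup E]
    [InnerProductSpace ℝ E] [CompleteSpace E] {F : E → ℝ} {g : E} {w : ℝ → E} {v : E} {s : ℝ}
    (hF : HasGradientAt F g (w s)) (hw : HasDerivAt w v s) :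
    HasDerivAt (fun u => F (w u)) ⟪g, v⟫ s := by
  simpa only [InnerProductSpace.toDual_apply_apply, Function.comp_def] using hF.hasFDerivAt.comp_hasDerivAt s hw

section GradientFlow

variable {E : Type*} [NormedAddCommGroup E] [InnerProductSpace ℝ E] [CompleteSpace E]

noncomputable def linearizableLyapunov (F : E → ℝ) (lam : ℝ) (wstar : E) (w : ℝ → E) (s : ℝ) :
    ℝ :=
  s * F (w s) + lam / 2 * ‖w s - wstar‖ ^ 2

theorem hasDerivAt_linearizableLyapunov {F : E → ℝ} (lam : ℝ) (wstar : E) {w : ℝ → E} {s : ℝ}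
    (hF : DifferentiableAt ℝ F (w s)) (hw : HasDerivAt w (-gradient F (w s)) s) :
    HasDerivAt (linearizableLyapunov F lam wstar w)
      (F (w s) - s * ‖gradient F (w s)‖ ^ 2 - lam * ⟪gradient F (w s), w s - wstar⟫) s := by
  have hFw := hF.hasGradientAt.comp_hasDerivAt hw
  have hdist := (hw.sub_const wstar).norm_sq
  refine (((hasDerivAt_id s).mul hFw).add (hdist.const_mul (lam / 2))).congr_deriv ?_
  rw [inner_neg_right, inner_neg_right, real_inner_self_eq_norm_sq, real_inner_comm]
  simp only [id]
  ring

theorem linearizableLyapunov_antitoneOn {F : E → ℝ} (hF : Differentiable ℝ F) {lam : ℝ}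
    {wstar : E} (hlin : ∀ u : E, F u ≤ lam * ⟪gradient F u, u - wstar⟫) {w : ℝ → E}
    (hw : ∀ t : ℝ, 0 ≤ t → HasDerivAt w (-gradient F (w t)) t) :
    AntitoneOn (linearizableLyapunov F lam wstar w) (Ici 0) := by
  refine antitoneOn_Ici_of_hasDerivAt_nonpos
    (fun s hs => hasDerivAt_linearizableLyapunov lam wstar (hF (w s)) (hw s hs))
    (fun s hs => ?_)
  have := hlin (w s)
  linarith [mul_nonneg hs.le (sq_nonneg ‖gradient F (w s)‖)]

end GradientFlow

theorem linearizable_implies_gradient_flow_rate_general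
    {E : Type*} [NormedAddCommGroup E] [InnerProductSpace ℝ E] [FiniteDimensional ℝ E]
    (F : E → ℝ) (hF : Differentiable ℝ F)
    (lam : ℝ) (wstar : E)
    (hlin : ∀ u : E, F u ≤ lam * ⟪gradient F u, u - wstar⟫)
    (w : ℝ → E)
    (hw : ∀ t : ℝ, 0 ≤ t → HasDerivAt w (-gradient F (w t)) t) :
    ∀ t : ℝ, 0 < t →
      F (w t) ≤ lam * (‖w 0 - wstar‖ ^ 2 - ‖w t - wstar‖ ^ 2) / (2 * t) := by
  intro t ht
  have hdecay : linearizableLyapunov F lam wstar w t ≤ linearizableLyapunov F lam wstar w 0 :=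
    linearizableLyapunov_antitoneOn hF hlin hw self_mem_Ici ht.le ht.le
  unfold linearizableLyapunov at hdecay
  rw [le_div_iff₀ (by positivity)]
  linarith

/-- λ-linearizability implies the corresponding convergence rate for gradient flow. -/
theorem linearizable_implies_gradient_flow_rate
    {E : Type*} [NormedAddCommGroup E] [InnerProductSpace ℝ E] [FiniteDimensional ℝ E]
    (F : E → ℝ) (hF : Differentiable ℝ F) (hFnonneg : ∀ u, 0 ≤ F u)
    (lam : ℝ) (hlam : 0 ≤ lam) (wstar : E)
    (hlin : ∀ u : E, F u ≤ lam * ⟪gradient F u, u - wstar⟫)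
    (w : ℝ → E)
    (hw : ∀ t : ℝ, 0 ≤ t → HasDerivAt w (-gradient F (w t)) t) :
    ∀ t : ℝ, 0 < t →
      F (w t) ≤ lam * (‖w 0 - wstar‖ ^ 2 - ‖w t - wstar‖ ^ 2) / (2 * t) :=
  linearizable_implies_gradient_flow_rate_general F hF lam wstar hlin w hw
end

section
/- Let E be a finite-dimensional real inner product space, F : E → ℝ continuously differentiable with F ≥ 0, λ ≥ 0, and w* ∈ E. Suppose that for every w₀ ∈ E there exists a gradient-flow trajectory w : [0,∞) → E of F with w(0) = w₀ satisfying F(w(t)) ≤ λ·(‖w₀ − w*‖² − ‖w(t) − w*‖²) / (2t) for every t > 0. Then F is λ-linearizable with respect to w*: F(u) ≤ λ⟨∇F(u), u − w*⟩ for every u ∈ E. -/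
open RealInnerProductSpace Filter Topology

/-! Differentiating the rate bound at `t = 0`: as `t → 0⁺` the left side tends to `F u`, while the
right side is `-λ/2` times a difference quotient of `t ↦ ‖w t - w*‖²`, whose derivative at `0`
along the flow started at `u` is `-2 ⟪∇F u, u - w*⟫`. -/

theorem HasDerivAt.tendsto_sub_div_two_mul_nhdsGT {g : ℝ → ℝ} {g' : ℝ} (hg : HasDerivAt g g' 0) :
    Tendsto (fun t => (g 0 - g t) / (2 * t)) (𝓝[>] 0) (𝓝 (-g' / 2)) := by
  have h := (hg.tendsto_slope_zero_right.const_mul (-1 / 2 : ℝ))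
  rw [show -1 / 2 * g' = -g' / 2 by ring] at h
  refine h.congr' (eventually_of_mem self_mem_nhdsWithin fun t ht => ?_)
  have ht : t ≠ 0 := ne_of_gt ht
  simp only [zero_add, smul_eq_mul]
  field_simp
  ring

theorem HasDerivAt.tendsto_norm_sub_sq_sub_div_two_mul_nhdsGT {E : Type*} [NormedAddCommGroup E]
    [InnerProductSpace ℝ E] {w : ℝ → E} {v : E} (hw : HasDerivAt w v 0) (c : E) :
    Tendsto (fun t => (‖w 0 - c‖ ^ 2 - ‖w t - c‖ ^ 2) / (2 * t)) (𝓝[>] 0)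
      (𝓝 (-⟪v, w 0 - c⟫)) := by
  have h := (hw.sub_const c).norm_sq.tendsto_sub_div_two_mul_nhdsGT
  rwa [real_inner_comm, show -(2 * ⟪v, w 0 - c⟫) / 2 = -⟪v, w 0 - c⟫ by ring] at h

theorem gradient_flow_rate_implies_linearizable_general
    {E : Type*} [NormedAddCommGroup E] [InnerProductSpace ℝ E] [FiniteDimensional ℝ E]
    (F : E → ℝ) (hF : ContDiff ℝ 1 F)
    (lam : ℝ) (wstar : E)
    (hrate : ∀ w₀ : E, ∃ w : ℝ → E, w 0 = w₀ ∧
      (∀ t : ℝ, 0 ≤ t → HasDerivAt w (-gradient F (w t)) t) ∧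
      (∀ t : ℝ, 0 < t →
        F (w t) ≤ lam * (‖w₀ - wstar‖ ^ 2 - ‖w t - wstar‖ ^ 2) / (2 * t))) :
    ∀ u : E, F u ≤ lam * ⟪gradient F u, u - wstar⟫ := by
  intro u
  obtain ⟨w, rfl, hflow, hbound⟩ := hrate u
  have hw : HasDerivAt w (-gradient F (w 0)) 0 := hflow 0 le_rfl
  have hlhs : Tendsto (fun t => F (w t)) (𝓝[>] 0) (𝓝 (F (w 0))) :=
    (hF.continuous.continuousAt.comp hw.continuousAt).tendsto.mono_left nhdsWithin_le_nhds
  have hrhs : Tendsto (fun t => lam * (‖w 0 - wstar‖ ^ 2 - ‖w t - wstar‖ ^ 2) / (2 * t))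
      (𝓝[>] 0) (𝓝 (lam * ⟪gradient F (w 0), w 0 - wstar⟫)) := by
    simpa only [mul_div_assoc, inner_neg_left, neg_neg] using
      (hw.tendsto_norm_sub_sq_sub_div_two_mul_nhdsGT wstar).const_mul lam
  exact le_of_tendsto_of_tendsto hlhs hrhs (eventually_of_mem self_mem_nhdsWithin hbound)

/-- The corresponding convergence rate for gradient flow from every initial point
implies λ-linearizability. -/
theorem gradient_flow_rate_implies_linearizable
    {E : Type*} [NormedAddCommGroup E] [InnerProductSpace ℝ E] [FiniteDimensional ℝ E]
    (F : E → ℝ) (hF : ContDiff ℝ 1 F) (hFnonneg : ∀ u, 0 ≤ F u)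
    (lam : ℝ) (hlam : 0 ≤ lam) (wstar : E)
    (hrate : ∀ w₀ : E, ∃ w : ℝ → E, w 0 = w₀ ∧
      (∀ t : ℝ, 0 ≤ t → HasDerivAt w (-gradient F (w t)) t) ∧
      (∀ t : ℝ, 0 < t →
        F (w t) ≤ lam * (‖w₀ - wstar‖ ^ 2 - ‖w t - wstar‖ ^ 2) / (2 * t))) :
    ∀ u : E, F u ≤ lam * ⟪gradient F u, u - wstar⟫ :=
  gradient_flow_rate_implies_linearizable_general F hF lam wstar hrate
end

section
/- Let E be a finite-dimensional real inner product space, F : E → ℝ differentiable with F ≥ 0, and λ > 0. Suppose that every gradient-flow trajectory w : [0,∞) → E of F satisfies F(w(t)) ≤ F(w(0)) / (λ t) for all t > 0. Then every gradient-flow trajectory w : [0,∞) → E of F satisfies F(w(t)) ≤ F(w(0)) · exp(−⌊λ t / e⌋) for all t ≥ 0, where ⌊·⌋ denotes the floor function and e is Euler's number. -/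
open RealInnerProductSpace Set

/-!
The rate hypothesis, applied to the flow restarted at time `a` and run for time `e / λ`, gives
`F(w(a + e/λ)) ≤ F(w(a)) / e`: every interval of length `e / λ` contracts `F` by the factor `e`.
Iterating this `⌊λt/e⌋` times and using that `F` decreases along the flow gives the claim.
-/

def IsGradientFlow {E : Type*} [NormedAddCommGroup E] [InnerProductSpace ℝ E] [CompleteSpace E]
    (F : E → ℝ) (w : ℝ → E) : Prop :=
  ∀ t : ℝ, 0 ≤ t → HasDerivAt w (-gradient F (w t)) t

section GradientFlow

variable {E : Type*} [NormedAddCommGroup E] [InnerProductSpace ℝ E] [CompleteSpace E]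
  {F : E → ℝ} {w : ℝ → E}

theorem hasDerivAt_comp_of_hasDerivAt_neg_gradient {s : ℝ} (hF : DifferentiableAt ℝ F (w s))
    (hw : HasDerivAt w (-gradient F (w s)) s) :
    HasDerivAt (F ∘ w) (-‖gradient F (w s)‖ ^ 2) s := by
  refine (hF.hasGradientAt.hasFDerivAt.comp_hasDerivAt s hw).congr_deriv ?_
  rw [InnerProductSpace.toDual_apply_apply, inner_neg_right, real_inner_self_eq_norm_sq]

theorem IsGradientFlow.antitoneOn (hw : IsGradientFlow F w) (hF : Differentiable ℝ F) :
    AntitoneOn (F ∘ w) (Ici 0) := by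
  have hderiv (s : ℝ) (hs : 0 ≤ s) :=
    hasDerivAt_comp_of_hasDerivAt_neg_gradient (hF _) (hw s hs)
  refine antitoneOn_of_hasDerivWithinAt_nonpos (f' := fun s => -‖gradient F (w s)‖ ^ 2)
    (convex_Ici 0)
    (fun s hs => (hderiv s hs).continuousAt.continuousWithinAt) (fun s hs => ?_)
    (fun s _ => neg_nonpos.mpr (sq_nonneg _))
  rw [interior_Ici] at hs
  exact (hderiv s hs.le).hasDerivWithinAt

theorem IsGradientFlow.comp_add_const (hw : IsGradientFlow F w) {a : ℝ} (ha : 0 ≤ a) :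
    IsGradientFlow F (fun s => w (s + a)) := fun s hs =>
  (hw (s + a) (add_nonneg hs ha)).comp_add_const s a

end GradientFlow

theorem AntitoneOn.le_pow_floor_mul {φ : ℝ → ℝ} (hφ : AntitoneOn φ (Ici 0)) {c q : ℝ}
    (hc : 0 < c) (hq : 0 ≤ q) (hstep : ∀ a, 0 ≤ a → φ (a + c) ≤ q * φ a) {t : ℝ}
    (ht : 0 ≤ t) :
    φ t ≤ q ^ ⌊t / c⌋₊ * φ 0 := by
  have hiter (n : ℕ) : φ (n * c) ≤ q ^ n * φ 0 := by
    induction n with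
    | zero => simp
    | succ n ih =>
      calc φ ((n + 1 : ℕ) * c) = φ (n * c + c) := by push_cast; ring_nf
        _ ≤ q * φ (n * c) := hstep _ (by positivity)
        _ ≤ q * (q ^ n * φ 0) := mul_le_mul_of_nonneg_left ih hq
        _ = q ^ (n + 1) * φ 0 := by ring
  have hfloor : ⌊t / c⌋₊ * c ≤ t :=
    (le_div_iff₀ hc).mp (Nat.floor_le (div_nonneg ht hc.le))
  exact (hφ (mem_Ici.mpr (by positivity)) ht hfloor).trans (hiter _)

theorem linear_rate_to_exponential_rate_general
    {E : Type*} [NormedAddCommGroup E] [InnerProductSpace ℝ E] [FiniteDimensional ℝ E]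
    (F : E → ℝ) (hF : Differentiable ℝ F)
    (lam : ℝ) (hlam : 0 < lam)
    (hrate : ∀ w : ℝ → E, (∀ t : ℝ, 0 ≤ t → HasDerivAt w (-gradient F (w t)) t) →
      ∀ t : ℝ, 0 < t → F (w t) ≤ F (w 0) / (lam * t)) :
    ∀ w : ℝ → E, (∀ t : ℝ, 0 ≤ t → HasDerivAt w (-gradient F (w t)) t) →
      ∀ t : ℝ, 0 ≤ t →
        F (w t) ≤ F (w 0) * Real.exp (-(⌊lam * t / Real.exp 1⌋ : ℝ)) := by
  intro w hw t ht
  have hc : 0 < Real.exp 1 / lam := by positivity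
  have hstep (a : ℝ) (ha : 0 ≤ a) :
      F (w (a + Real.exp 1 / lam)) ≤ Real.exp (-1) * F (w a) := by
    have h := hrate _ (IsGradientFlow.comp_add_const hw ha) _ hc
    rw [mul_div_cancel₀ _ hlam.ne', zero_add, add_comm] at h
    rwa [Real.exp_neg, inv_mul_eq_div]
  have h := (IsGradientFlow.antitoneOn hw hF).le_pow_floor_mul hc (Real.exp_pos _).le hstep ht
  rw [div_div_eq_mul_div, ← Real.exp_nat_mul, mul_neg_one, mul_comm t lam,
    natCast_floor_eq_intCast_floor (by positivity), mul_comm] at h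
  exact h

/-- If gradient flow converges at rate `F(w(0))/(λt)` from every initial point, then it
in fact converges at an exponential rate `F(w(0))·e^{-⌊λt/e⌋}`. -/
theorem linear_rate_to_exponential_rate
    {E : Type*} [NormedAddCommGroup E] [InnerProductSpace ℝ E] [FiniteDimensional ℝ E]
    (F : E → ℝ) (hF : Differentiable ℝ F) (hFnonneg : ∀ u, 0 ≤ F u)
    (lam : ℝ) (hlam : 0 < lam)
    (hrate : ∀ w : ℝ → E, (∀ t : ℝ, 0 ≤ t → HasDerivAt w (-gradient F (w t)) t) →
      ∀ t : ℝ, 0 < t → F (w t) ≤ F (w 0) / (lam * t)) :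
    ∀ w : ℝ → E, (∀ t : ℝ, 0 ≤ t → HasDerivAt w (-gradient F (w t)) t) →
      ∀ t : ℝ, 0 ≤ t →
        F (w t) ≤ F (w 0) * Real.exp (-(⌊lam * t / Real.exp 1⌋ : ℝ)) :=
  linear_rate_to_exponential_rate_general F hF lam hlam hrate
end

section
/- For every positive integer T₀ there exist a dimension d ∈ ℕ, a convex, continuously differentiable function F : ℝ^d → ℝ with F ≥ 0 whose unique minimizer is 0 with F(0) = 0, and a point w₀ ∈ ℝ^d with ‖w₀‖ ≤ 1 and F(w₀) ≤ 2, such that for every step size η > 0, the gradient descent iterates defined by w₀ and w_{t+1} = w_t − η∇F(w_t) satisfy F(w_t) > 1/10 for every t with 0 ≤ t ≤ T₀. -/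
noncomputable section GDaux

private abbrev E2 := EuclideanSpace ℝ (Fin 2)

private def gfun (s : ℝ) (x : ℝ) : ℝ := 4*(Real.cosh (x/s) - 1)

private def Ffun (s : ℝ) (w : E2) : ℝ := gfun s (w 0) + gfun 1 (w 1)

private lemma exp_half_lt : Real.exp (1/2) < 1.65 := by
  have h := Real.exp_one_lt_d9
  have h2 : Real.exp (1/2) * Real.exp (1/2) = Real.exp 1 := by
    rw [← Real.exp_add]; norm_num
  nlinarith [Real.exp_pos (1/2:ℝ)]

private lemma aux_cosh_half : Real.cosh (1/2) ≤ 5/4 := by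
  have h1 := exp_half_lt
  have h2 : Real.exp (-(1/2:ℝ)) ≤ 2/3 := by
    rw [Real.exp_neg]
    have : (3/2:ℝ) ≤ Real.exp (1/2) := by
      have := Real.add_one_le_exp (1/2:ℝ); linarith
    rw [inv_le_comm₀ (by positivity) (by norm_num)]
    linarith
  rw [Real.cosh_eq]
  norm_num at h1 h2 ⊢
  linarith

private lemma aux_sinh_half : Real.sinh (1/2) ≤ 1 := by
  have h1 := exp_half_lt
  have h2 : (0:ℝ) < Real.exp (-(1/2:ℝ)) := Real.exp_pos _
  rw [Real.sinh_eq]; norm_num at h1 ⊢; linarith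

private lemma aux_cosh_gt (u : ℝ) (hu : 1/4 ≤ |u|) : 1/10 < 4*(Real.cosh u - 1) := by
  have h1 : Real.cosh (1/4) ≤ Real.cosh u := by
    rw [Real.cosh_le_cosh]
    rw [abs_of_nonneg (by norm_num : (0:ℝ) ≤ 1/4)]; exact hu
  have h2 : Real.cosh (1/4:ℝ) ^ 2 = Real.sinh (1/4:ℝ)^2 + 1 := Real.cosh_sq _
  have h3 : (1/4:ℝ) ≤ Real.sinh (1/4) := Real.self_le_sinh_iff.2 (by norm_num)
  have h4 : (0:ℝ) < Real.cosh (1/4) := Real.cosh_pos _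
  nlinarith

private lemma gfun_gt (s x : ℝ) (hs : s ≠ 0) (hx : 1/4 ≤ |x/s|) : 1/10 < gfun s x := by
  have := aux_cosh_gt (x/s) hx
  unfold gfun; linarith

private lemma small_step (T : ℕ) (hT : 0 < T) (ε : ℝ) (hε : 0 < ε) (hε' : ε ≤ 1/(4*T))
    (v : ℕ → ℝ) (h0 : v 0 = 1/2) (hrec : ∀ t, v (t+1) = v t - ε * Real.sinh (v t)) :
    ∀ t, t ≤ T → 1/2 - t*ε ≤ v t ∧ v t ≤ 1/2 := by
  intro t
  induction t with
  | zero => intro _; simp [h0]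
  | succ n ih =>
    intro hn
    have hn' : n ≤ T := Nat.le_of_succ_le hn
    obtain ⟨hlo, hhi⟩ := ih hn'
    have hTε : (T:ℝ) * ε ≤ 1/4 := by
      have hT1 : (1:ℝ) ≤ T := by exact_mod_cast hT
      have h4T : (0:ℝ) < 4*T := by positivity
      rw [le_div_iff₀ h4T] at hε'
      nlinarith
    have hnε : (n:ℝ) * ε ≤ 1/4 := by
      have : (n:ℝ) ≤ T := by exact_mod_cast hn'
      nlinarith
    have hvn_pos : 0 < v n := by linarith
    have hs_pos : 0 ≤ Real.sinh (v n) := Real.sinh_nonneg_iff.2 hvn_pos.le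
    have hs_le : Real.sinh (v n) ≤ 1 := by
      have : Real.sinh (v n) ≤ Real.sinh (1/2) := Real.sinh_le_sinh.2 hhi
      linarith [aux_sinh_half]
    constructor
    · rw [hrec n]
      push_cast
      nlinarith
    · rw [hrec n]
      nlinarith

private lemma large_step (ε : ℝ) (hε : 2 ≤ ε) (v : ℕ → ℝ) (h0 : 1/2 ≤ |v 0|)
    (hrec : ∀ t, v (t+1) = v t - ε * Real.sinh (v t)) : ∀ t, 1/2 ≤ |v t| := by
  intro t
  induction t with
  | zero => exact h0
  | succ n ih =>
    rw [hrec n]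
    have h1 : |v n| ≤ Real.sinh |v n| := by
      rcases eq_or_lt_of_le (abs_nonneg (v n)) with h | h
      · simp [← h]
      · exact (Real.self_le_sinh_iff.2 (abs_nonneg _))
    have h2 : |ε * Real.sinh (v n)| = ε * Real.sinh |v n| := by
      rw [abs_mul, abs_of_nonneg (by linarith : (0:ℝ) ≤ ε), Real.abs_sinh]
    have h3 : |ε * Real.sinh (v n)| - |v n| ≤ |v n - ε * Real.sinh (v n)| := by
      rw [abs_sub_comm]
      exact le_trans (sub_le_sub_right (le_refl _) _) (abs_sub_abs_le_abs_sub _ _)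
    rw [h2] at h3
    nlinarith

private lemma hasDerivAt_gfun (s : ℝ) (x : ℝ) :
    HasDerivAt (gfun s) ((4/s) * Real.sinh (x/s)) x := by
  have h1 : HasDerivAt (fun y : ℝ => y / s) (1/s) x := by
    simpa using (hasDerivAt_id x).div_const s
  have h2 := (Real.hasDerivAt_cosh (x/s)).comp x h1
  have h3 := ((h2.sub_const 1).const_mul 4)
  exact h3.congr_deriv (by ring)

private lemma hasGradientAt_Ffun (s : ℝ) (x : E2) :
    HasGradientAt (Ffun s)
      (EuclideanSpace.single 0 ((4/s) * Real.sinh (x 0 / s)) +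
       EuclideanSpace.single 1 ((4/1) * Real.sinh (x 1 / 1))) x := by
  have h0 := (hasDerivAt_gfun s (x 0)).comp_hasFDerivAt x
    (EuclideanSpace.proj (0 : Fin 2) : E2 →L[ℝ] ℝ).hasFDerivAt
  have h1 := (hasDerivAt_gfun 1 (x 1)).comp_hasFDerivAt x
    (EuclideanSpace.proj (1 : Fin 2) : E2 →L[ℝ] ℝ).hasFDerivAt
  have hF := h0.add h1
  rw [hasGradientAt_iff_hasFDerivAt]
  have heq : (InnerProductSpace.toDual ℝ E2)
      (EuclideanSpace.single 0 ((4/s) * Real.sinh (x 0 / s)) +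
       EuclideanSpace.single 1 ((4/1) * Real.sinh (x 1 / 1)))
      = ((4/s) * Real.sinh (x 0 / s)) • (EuclideanSpace.proj (0 : Fin 2) : E2 →L[ℝ] ℝ)
        + ((4/1) * Real.sinh (x 1 / 1)) • (EuclideanSpace.proj (1 : Fin 2) : E2 →L[ℝ] ℝ) := by
    refine ContinuousLinearMap.ext fun u => ?_
    simp [InnerProductSpace.toDual_apply_apply, inner_add_left, EuclideanSpace.inner_single_left]
  rw [heq]
  exact hF

private lemma gradient_Ffun (s : ℝ) (x : E2) :
    gradient (Ffun s) x =
      (EuclideanSpace.single 0 ((4/s) * Real.sinh (x 0 / s)) +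
       EuclideanSpace.single 1 ((4/1) * Real.sinh (x 1 / 1))) :=
  (hasGradientAt_Ffun s x).gradient

private lemma convexOn_cosh : ConvexOn ℝ Set.univ Real.cosh := by
  have h1 : ConvexOn ℝ Set.univ Real.exp := convexOn_exp
  have h2 : ConvexOn ℝ Set.univ (fun x : ℝ => Real.exp (-x)) := by
    have := h1.comp_linearMap (-LinearMap.id : ℝ →ₗ[ℝ] ℝ)
    simp at this
    exact this
  have h3 := (h1.add h2).smul (by norm_num : (0:ℝ) ≤ 1/2)
  have : Real.cosh = fun x => (1/2 : ℝ) • (Real.exp x + Real.exp (-x)) := by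
    funext x; rw [Real.cosh_eq]; simp; ring
  rw [this]; exact h3

private lemma convexOn_gcomp (s : ℝ) (i : Fin 2) :
    ConvexOn ℝ Set.univ (fun w : E2 => gfun s (w i)) := by
  have hl : ConvexOn ℝ Set.univ (fun w : E2 => Real.cosh (w i / s)) := by
    have := convexOn_cosh.comp_linearMap
      ((s⁻¹ : ℝ) • (PiLp.projₗ 2 (fun _ : Fin 2 => ℝ) i : E2 →ₗ[ℝ] ℝ))
    have he : (Real.cosh ∘ ⇑((s⁻¹ : ℝ) • (PiLp.projₗ 2 (fun _ : Fin 2 => ℝ) i : E2 →ₗ[ℝ] ℝ)))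
        = fun w : E2 => Real.cosh (w i / s) := by
      funext w
      simp [div_eq_mul_inv, mul_comm]
    rw [Set.preimage_univ, he] at this; exact this
  have h2 := (hl.smul (by norm_num : (0:ℝ) ≤ 4)).add_const (-4)
  exact h2.congr (fun w _ => by simp only [Pi.add_apply, gfun, smul_eq_mul]; ring)

private lemma contDiff_Ffun (s : ℝ) : ContDiff ℝ 1 (Ffun s) := by
  have hc : ∀ (c : ℝ) (i : Fin 2), ContDiff ℝ 1 (fun w : E2 => gfun c (w i)) := by
    intro c i
    have h1 : ContDiff ℝ 1 (fun w : E2 => w i) :=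
      (EuclideanSpace.proj (i : Fin 2) : E2 →L[ℝ] ℝ).contDiff
    exact contDiff_const.mul ((Real.contDiff_cosh.comp (h1.div_const c)).sub contDiff_const)
  exact (hc s 0).add (hc 1 1)

private lemma gfun_nonneg (s x : ℝ) : 0 ≤ gfun s x := by
  have := Real.one_le_cosh (x/s); unfold gfun; linarith

private lemma gfun_pos (s x : ℝ) (hs : s ≠ 0) (hx : x ≠ 0) : 0 < gfun s x := by
  have : 1 < Real.cosh (x/s) := Real.one_lt_cosh.2 (div_ne_zero hx hs)
  unfold gfun; linarith

end GDaux

/-- There exists a convex, continuously differentiable function on which gradient flow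
converges but gradient descent fails, for any step size, to find a `1/10`-suboptimal
point within `T₀` steps. -/
theorem exists_convex_function_gd_fails (T₀ : ℕ) (hT₀ : 0 < T₀) :
    ∃ (d : ℕ) (F : EuclideanSpace ℝ (Fin d) → ℝ) (w₀ : EuclideanSpace ℝ (Fin d)),
      ConvexOn ℝ Set.univ F ∧ ContDiff ℝ 1 F ∧ (∀ u, 0 ≤ F u) ∧
      F 0 = 0 ∧ (∀ u, u ≠ 0 → 0 < F u) ∧
      ‖w₀‖ ≤ 1 ∧ F w₀ ≤ 2 ∧
      ∀ η : ℝ, 0 < η → ∀ w : ℕ → EuclideanSpace ℝ (Fin d),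
        w 0 = w₀ → (∀ t : ℕ, w (t + 1) = w t - η • gradient F (w t)) →
        ∀ t : ℕ, t ≤ T₀ → 1 / 10 < F (w t) := by
  classical
  set s : ℝ := 1/(3*T₀) with hs_def
  have hT₀R : (1:ℝ) ≤ T₀ := by exact_mod_cast hT₀
  have hs_pos : 0 < s := by positivity
  have hs_ne : s ≠ 0 := hs_pos.ne'
  have hs_le : s ≤ 1/3 := by
    rw [hs_def]
    rw [div_le_div_iff₀ (by positivity) (by norm_num)]
    nlinarith
  set W : EuclideanSpace ℝ (Fin 2) :=
    EuclideanSpace.single 0 (s/2) + EuclideanSpace.single 1 (1/2) with hW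
  have hW0 : W 0 = s/2 := by simp [hW, EuclideanSpace.single_apply]
  have hW1 : W 1 = 1/2 := by simp [hW, EuclideanSpace.single_apply]
  refine ⟨2, Ffun s, W, ?_, contDiff_Ffun s, ?_, ?_, ?_, ?_, ?_, ?_⟩
  · exact (convexOn_gcomp s 0).add (convexOn_gcomp 1 1)
  · intro u; exact add_nonneg (gfun_nonneg _ _) (gfun_nonneg _ _)
  · simp [Ffun, gfun]
  · intro u hu
    have : u 0 ≠ 0 ∨ u 1 ≠ 0 := by
      by_contra hc
      push_neg at hc
      exact hu (by ext i; fin_cases i <;> simp [hc.1, hc.2])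
    rcases this with h | h
    · have := gfun_pos s (u 0) hs_ne h
      have := gfun_nonneg 1 (u 1)
      unfold Ffun; linarith
    · have := gfun_pos 1 (u 1) one_ne_zero h
      have := gfun_nonneg s (u 0)
      unfold Ffun; linarith
  · -- norm bound
    rw [EuclideanSpace.norm_eq]
    rw [Fin.sum_univ_two, hW0, hW1]
    have harg : ‖s/2‖^2 + ‖(1/2:ℝ)‖^2 ≤ 1 := by
      rw [Real.norm_eq_abs, Real.norm_eq_abs, abs_of_nonneg (by positivity : (0:ℝ) ≤ s/2),
        abs_of_nonneg (by norm_num : (0:ℝ) ≤ (1/2:ℝ))]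
      nlinarith
    calc Real.sqrt (‖s/2‖^2 + ‖(1/2:ℝ)‖^2) ≤ Real.sqrt 1 := Real.sqrt_le_sqrt harg
      _ = 1 := Real.sqrt_one
  · -- value bound
    rw [Ffun, hW0, hW1]
    have hds : (s/2)/s = 1/2 := by field_simp
    rw [gfun, gfun, hds]
    norm_num
    linarith [aux_cosh_half]
  · intro η hη w hw0 hwrec
    -- coordinate recursions
    have hco : ∀ (t : ℕ) (i : Fin 2), w (t+1) i
        = w t i - η * ((gradient (Ffun s) (w t)) i) := by
      intro t i
      have h := congrArg (fun z : EuclideanSpace ℝ (Fin 2) => z i) (hwrec t)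
      simpa using h
    have hrec0 : ∀ t : ℕ, w (t+1) 0 = w t 0 - η * ((4/s) * Real.sinh (w t 0 / s)) := by
      intro t
      have h := hco t 0
      rw [gradient_Ffun] at h
      simpa [EuclideanSpace.single_apply] using h
    have hrec1 : ∀ t : ℕ, w (t+1) 1 = w t 1 - (4*η) * Real.sinh (w t 1) := by
      intro t
      have h := hco t 1
      rw [gradient_Ffun] at h
      simp [EuclideanSpace.single_apply] at h
      rw [h]; ring
    by_cases hcase : η ≤ 1/(16*T₀)
    · -- small step: coordinate 1
      have hε : (0:ℝ) < 4*η := by linarith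
      have hε' : 4*η ≤ 1/(4*T₀) := by
        rw [le_div_iff₀ (by positivity)] at hcase ⊢
        linarith
      have hsm := small_step T₀ hT₀ (4*η) hε hε' (fun t => w t 1)
        (by show w 0 1 = 1/2; rw [hw0]; exact hW1) (fun t => hrec1 t)
      intro t ht
      obtain ⟨hlo, hhi⟩ := hsm t ht
      have htε : (t:ℝ) * (4*η) ≤ 1/4 := by
        have h1 : (t:ℝ) ≤ T₀ := by exact_mod_cast ht
        rw [le_div_iff₀ (by positivity : (0:ℝ) < 4*T₀)] at hε'
        nlinarith
      have hq : 1/4 ≤ |w t 1 / 1| := by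
        rw [div_one, abs_of_nonneg (by linarith)]
        linarith
      have := gfun_gt 1 (w t 1) one_ne_zero hq
      have := gfun_nonneg s (w t 0)
      unfold Ffun; linarith
    · -- large step: coordinate 0
      push_neg at hcase
      set v : ℕ → ℝ := fun t => w t 0 / s with hv
      have hvrec : ∀ t, v (t+1) = v t - (4*η/s^2) * Real.sinh (v t) := by
        intro t
        rw [hv]
        simp only
        rw [hrec0 t]
        field_simp
      have hv0 : 1/2 ≤ |v 0| := by
        show 1/2 ≤ |w 0 0 / s|
        rw [hw0, hW0, show s/2/s = 1/2 by field_simp]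
        rw [abs_of_nonneg (by norm_num : (0:ℝ) ≤ 1/2)]
      have hεlarge : (2:ℝ) ≤ 4*η/s^2 := by
        rw [le_div_iff₀ (by positivity)]
        have hs2 : s^2 = 1/(9*T₀^2) := by
          rw [hs_def]; field_simp; ring
        rw [hs2, mul_one_div, div_le_iff₀ (by positivity : (0:ℝ) < 9*(T₀:ℝ)^2)]
        rw [div_lt_iff₀ (by positivity : (0:ℝ) < 16*(T₀:ℝ))] at hcase
        have h1 : (1:ℝ) ≤ T₀ := hT₀R
        have t1 : (0:ℝ) ≤ (η*T₀)*((T₀:ℝ)-1) := by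
          apply mul_nonneg (by positivity)
          linarith
        nlinarith
      have hlg := large_step (4*η/s^2) hεlarge v hv0 hvrec
      intro t ht
      have hq : 1/4 ≤ |w t 0 / s| := by
        have := hlg t
        rw [hv] at this
        simp only at this
        linarith
      have := gfun_gt s (w t 0) hs_ne hq
      have := gfun_nonneg 1 (w t 1)
      unfold Ffun; linarith
end

section
/- Let E be a finite-dimensional real inner product space. Let F : E → ℝ be continuously differentiable with F ≥ 0 and Φ : E → ℝ twice continuously differentiable with Φ ≥ 0. Let g, ψ, ζ : [0,∞) → [0,∞) be monotone nondecreasing with g(0) = 0, and let ρ : [0,∞) → (0,∞) be differentiable and monotone nondecreasing. Assume: (i) admissibility: ⟨∇Φ(u), ∇F(u)⟩ ≥ g(F(u)) for all u ∈ E; (ii) ‖∇F(u)‖² ≤ ψ(F(u)) for all u; (iii) the operator norm of the Hessian satisfies ‖∇²Φ(u)‖ ≤ ρ(Φ(u)) for all u; (iv) F(u) ≤ ζ(Φ(u)) for all u. Let θ : [0,∞) → ℝ be the function with θ(0) = 0 and θ'(z) = 1/ρ(z) for all z ≥ 0. Then for every η > 0, every T ≥ 1, and every initial point w₀, the gradient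 descent iterates w_{t+1} = w_t − η∇F(w_t) satisfy min_{0 ≤ t ≤ T} g(F(w_t)) ≤ 2θ(Φ(w₀))ρ(Φ(w₀)) / (ηT) + η·ρ(Φ(w₀))·ψ(ζ(Φ(w₀))). -/
open RealInnerProductSpace

section GDAux

open Set Filter Topology

private lemma gd_deriv_nonneg_of_monotoneOn {ρ : ℝ → ℝ} {x d : ℝ} (hx : 0 < x)
    (hmono : MonotoneOn ρ (Set.Ici 0)) (hd : HasDerivAt ρ d x) : 0 ≤ d := by
  have h1 : Tendsto (slope ρ x) (𝓝[>] x) (𝓝 d) :=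
    (hasDerivAt_iff_tendsto_slope.1 hd).mono_left
      (nhdsWithin_mono x fun y hy => ne_of_gt hy)
  refine ge_of_tendsto h1 ?_
  filter_upwards [self_mem_nhdsWithin] with y hy
  have hy' : x < y := hy
  have hnum : ρ x ≤ ρ y := hmono hx.le (hx.trans hy').le hy'.le
  simp only [slope_def_field]
  apply div_nonneg <;> linarith

private lemma gd_step_taylor (ρ θ : ℝ → ℝ)
    (hρpos : ∀ z, 0 ≤ z → 0 < ρ z) (hρmono : MonotoneOn ρ (Set.Ici 0))
    (hρdiff : DifferentiableOn ℝ ρ (Set.Ici 0))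
    (hθ' : ∀ z, 0 ≤ z → HasDerivAt θ (1 / ρ z) z)
    (φ φ' φ'' : ℝ → ℝ)
    (hφd : ∀ s, HasDerivAt φ (φ' s) s)
    (hφd' : ∀ s, HasDerivAt φ' (φ'' s) s)
    (hφnn : ∀ s, 0 ≤ φ s)
    (c : ℝ) (hc : 0 ≤ c)
    (hφ'' : ∀ s, φ'' s ≤ ρ (φ s) * c) :
    θ (φ 1) ≤ θ (φ 0) + φ' 0 / ρ (φ 0) + c / 2 := by
  set q : ℝ → ℝ := fun s => φ' s / ρ (φ s) with hq_def
  have hρφpos : ∀ s, 0 < ρ (φ s) := fun s => hρpos _ (hφnn s)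
  have hφc : Continuous φ := by
    rw [continuous_iff_continuousAt]; exact fun s => (hφd s).continuousAt
  have hφ'c : Continuous φ' := by
    rw [continuous_iff_continuousAt]; exact fun s => (hφd' s).continuousAt
  have hρφc : Continuous fun s => ρ (φ s) :=
    hρdiff.continuousOn.comp_continuous hφc fun s => hφnn s
  have hqc : Continuous q := hφ'c.div hρφc fun s => (hρφpos s).ne'
  have hh : ∀ s, HasDerivAt (fun r => θ (φ r)) (q s) s := by
    intro s
    have h := (hθ' (φ s) (hφnn s)).comp s (hφd s)
    exact h.congr_deriv (by show 1 / ρ (φ s) * φ' s = φ' s / ρ (φ s); ring)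
  have hqd : ∀ s, 0 < φ s → ∃ d, HasDerivAt q d s ∧ d ≤ c := by
    intro s hs
    have hmem : Set.Ici (0:ℝ) ∈ 𝓝 (φ s) := Ici_mem_nhds hs
    have hρda : DifferentiableAt ℝ ρ (φ s) := hρdiff.differentiableAt hmem
    have hρd : HasDerivAt ρ (deriv ρ (φ s)) (φ s) := hρda.hasDerivAt
    have hdρ0 : 0 ≤ deriv ρ (φ s) := gd_deriv_nonneg_of_monotoneOn hs hρmono hρd
    have hcomp : HasDerivAt (fun r => ρ (φ r)) (deriv ρ (φ s) * φ' s) s :=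
      hρd.comp s (hφd s)
    have hdiv : HasDerivAt q
        ((φ'' s * ρ (φ s) - φ' s * (deriv ρ (φ s) * φ' s)) / ρ (φ s) ^ 2) s :=
      (hφd' s).div hcomp (hρφpos s).ne'
    refine ⟨_, hdiv, ?_⟩
    rw [div_le_iff₀ (pow_pos (hρφpos s) 2)]
    have h1 : φ'' s * ρ (φ s) ≤ ρ (φ s) * c * ρ (φ s) :=
      mul_le_mul_of_nonneg_right (hφ'' s) (hρφpos s).le
    nlinarith [mul_nonneg hdρ0 (sq_nonneg (φ' s)), hρφpos s]
  have keymono : ∀ x y : ℝ, (∀ s ∈ Set.Ioo x y, 0 < φ s) →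
      MonotoneOn (fun s => c * s - q s) (Set.Icc x y) := by
    intro x y hpos
    apply monotoneOn_of_deriv_nonneg (convex_Icc x y)
    · exact ((continuous_const.mul continuous_id).sub hqc).continuousOn
    · intro s hs
      rw [interior_Icc] at hs
      obtain ⟨d, hd, _⟩ := hqd s (hpos s hs)
      exact (((hasDerivAt_id s).const_mul c).sub hd).differentiableAt.differentiableWithinAt
    · intro s hs
      rw [interior_Icc] at hs
      obtain ⟨d, hd, hdc⟩ := hqd s (hpos s hs)
      have hD : HasDerivAt (fun s => c * s - q s) (c * 1 - d) s :=
        ((hasDerivAt_id s).const_mul c).sub hd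
      rw [hD.deriv]
      linarith
  have hK : ∀ a b : ℝ, a ≤ b → q b - c * b ≤ q a - c * a := by
    intro a b hab
    by_cases hZ : ∀ s ∈ Set.Icc a b, 0 < φ s
    · have hm := keymono a b fun s hs => hZ s (Ioo_subset_Icc_self hs)
      have := hm (left_mem_Icc.2 hab) (right_mem_Icc.2 hab) hab
      simp only at this
      linarith
    · push_neg at hZ
      obtain ⟨s₀, hs₀, hs₀'⟩ := hZ
      set Z : Set ℝ := Set.Icc a b ∩ φ ⁻¹' {0} with hZdef
      have hZne : Z.Nonempty := ⟨s₀, hs₀, le_antisymm hs₀' (hφnn s₀)⟩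
      have hZc : IsClosed Z := isClosed_Icc.inter (isClosed_singleton.preimage hφc)
      have hZbb : BddBelow Z := (bddBelow_Icc (a := b) (b := a)).mono inter_subset_left
      have hZba : BddAbove Z := (bddAbove_Icc (a := a) (b := b)).mono inter_subset_left
      set a' := sInf Z with ha'def
      set b' := sSup Z with hb'def
      have ha' : a' ∈ Z := hZc.csInf_mem hZne hZbb
      have hb' : b' ∈ Z := hZc.csSup_mem hZne hZba
      have hab' : a' ≤ b' := csInf_le_csSup hZne hZbb hZba
      have hφa' : φ a' = 0 := ha'.2
      have hφb' : φ b' = 0 := hb'.2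
      have hqa' : q a' = 0 := by
        have hmin : IsLocalMin φ a' :=
          Filter.Eventually.of_forall fun y => hφa' ▸ hφnn y
        have := hmin.hasDerivAt_eq_zero (hφd a')
        simp [hq_def, this]
      have hqb' : q b' = 0 := by
        have hmin : IsLocalMin φ b' :=
          Filter.Eventually.of_forall fun y => hφb' ▸ hφnn y
        have := hmin.hasDerivAt_eq_zero (hφd b')
        simp [hq_def, this]
      have hleft : c * a - q a ≤ c * a' - q a' := by
        have hm := keymono a a' ?_
        · exact hm (left_mem_Icc.2 ha'.1.1) (right_mem_Icc.2 ha'.1.1) ha'.1.1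
        · intro s hs
          have hsIcc : s ∈ Set.Icc a b := ⟨hs.1.le, hs.2.le.trans (hab'.trans hb'.1.2)⟩
          rcases (hφnn s).lt_or_eq with h | h
          · exact h
          · exfalso
            have : s ∈ Z := ⟨hsIcc, h.symm⟩
            exact absurd (csInf_le hZbb this) (not_le.2 hs.2)
      have hright : c * b' - q b' ≤ c * b - q b := by
        have hm := keymono b' b ?_
        · exact hm (left_mem_Icc.2 hb'.1.2) (right_mem_Icc.2 hb'.1.2) hb'.1.2
        · intro s hs
          have hsIcc : s ∈ Set.Icc a b := ⟨ha'.1.1.trans (hab'.trans hs.1.le), hs.2.le⟩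
          rcases (hφnn s).lt_or_eq with h | h
          · exact h
          · exfalso
            have : s ∈ Z := ⟨hsIcc, h.symm⟩
            exact absurd (le_csSup hZba this) (not_le.2 hs.1)
      have hca : 0 ≤ c * (b' - a') := mul_nonneg hc (by linarith)
      nlinarith
  have hG : ∀ s, HasDerivAt
      (fun s => θ (φ 0) + q 0 * s + c * s ^ 2 / 2 - θ (φ s)) (q 0 + c * s - q s) s := by
    intro s
    have h1 : HasDerivAt (fun s : ℝ => θ (φ 0) + q 0 * s) (q 0) s := by
      simpa using ((hasDerivAt_id s).const_mul (q 0)).const_add (θ (φ 0))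
    have h2 : HasDerivAt (fun s : ℝ => c * s ^ 2 / 2) (c * s) s := by
      have := ((hasDerivAt_pow 2 s).const_mul c).div_const 2
      exact this.congr_deriv (by ring)
    exact (h1.add h2).sub (hh s)
  have hGmono : MonotoneOn
      (fun s => θ (φ 0) + q 0 * s + c * s ^ 2 / 2 - θ (φ s)) (Set.Icc (0:ℝ) 1) := by
    apply monotoneOn_of_deriv_nonneg (convex_Icc 0 1)
    · exact Continuous.continuousOn
        (continuous_iff_continuousAt.2 fun s => (hG s).continuousAt)
    · intro s hs
      exact (hG s).differentiableAt.differentiableWithinAt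
    · intro s hs
      rw [interior_Icc] at hs
      rw [(hG s).deriv]
      have := hK 0 s hs.1.le
      linarith
  have hfin := hGmono (left_mem_Icc.2 zero_le_one) (right_mem_Icc.2 zero_le_one) zero_le_one
  simp only at hfin
  have hq0 : q 0 = φ' 0 / ρ (φ 0) := rfl
  rw [← hq0]
  nlinarith [hfin]

private lemma gd_step {E : Type*} [NormedAddCommGroup E] [InnerProductSpace ℝ E]
    [CompleteSpace E]
    (F Φ : E → ℝ) (hΦ : ContDiff ℝ 2 Φ) (hΦnonneg : ∀ u, 0 ≤ Φ u)
    (g ψ ρ : ℝ → ℝ)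
    (hρpos : ∀ z : ℝ, 0 ≤ z → 0 < ρ z) (hρmono : MonotoneOn ρ (Set.Ici 0))
    (hρdiff : DifferentiableOn ℝ ρ (Set.Ici 0))
    (hadm : ∀ u : E, g (F u) ≤ ⟪gradient Φ u, gradient F u⟫)
    (hFgrad : ∀ u : E, ‖gradient F u‖ ^ 2 ≤ ψ (F u))
    (hHess : ∀ u : E, ‖fderiv ℝ (gradient Φ) u‖ ≤ ρ (Φ u))
    (θ : ℝ → ℝ) (hθ' : ∀ z : ℝ, 0 ≤ z → HasDerivAt θ (1 / ρ z) z)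
    (η : ℝ) (hη : 0 ≤ η) (u : E) :
    θ (Φ (u - η • gradient F u)) ≤
      θ (Φ u) - η * g (F u) / ρ (Φ u) + η ^ 2 * ψ (F u) / 2 := by
  set v := -(η • gradient F u) with hv
  set φ : ℝ → ℝ := fun s => Φ (u + s • v) with hφdef
  set φ' : ℝ → ℝ := fun s => ⟪gradient Φ (u + s • v), v⟫ with hφ'def
  set φ'' : ℝ → ℝ := fun s => ⟪(fderiv ℝ (gradient Φ) (u + s • v)) v, v⟫ with hφ''def
  have hΦdiff : Differentiable ℝ Φ := hΦ.differentiable two_ne_zero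
  have hfud : ContDiff ℝ 1 (fderiv ℝ Φ) := hΦ.fderiv_right (by norm_num)
  have hGC : ContDiff ℝ 1 (gradient Φ) := by
    have he : (gradient Φ) = fun x => (InnerProductSpace.toDual ℝ E).symm (fderiv ℝ Φ x) := rfl
    rw [he]
    exact (InnerProductSpace.toDual ℝ E).symm.contDiff.comp hfud
  have hGdiff : Differentiable ℝ (gradient Φ) := hGC.differentiable one_ne_zero
  have hinner : ∀ (x : E) (y : E), ⟪gradient Φ x, y⟫ = fderiv ℝ Φ x y := fun x y =>
    InnerProductSpace.toDual_symm_apply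
  have hL : ∀ s : ℝ, HasDerivAt (fun r : ℝ => u + r • v) v s := by
    intro s
    have h := ((hasDerivAt_id s).smul_const v).const_add u
    simpa using h
  have hφd : ∀ s, HasDerivAt φ (φ' s) s := by
    intro s
    have h1 := ((hΦdiff (u + s • v)).hasFDerivAt).comp_hasDerivAt s (hL s)
    have : φ' s = fderiv ℝ Φ (u + s • v) v := hinner _ _
    rw [this]
    exact h1
  have hφd' : ∀ s, HasDerivAt φ' (φ'' s) s := by
    intro s
    have hg : HasFDerivAt (gradient Φ) (fderiv ℝ (gradient Φ) (u + s • v)) (u + s • v) :=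
      (hGdiff _).hasFDerivAt
    have h2 : HasFDerivAt (fun x => (innerSL ℝ v) (gradient Φ x))
        ((innerSL ℝ v).comp (fderiv ℝ (gradient Φ) (u + s • v))) (u + s • v) :=
      ((innerSL ℝ v).hasFDerivAt).comp _ hg
    have h3 := h2.comp_hasDerivAt s (hL s)
    have e1 : (fun r : ℝ => (innerSL ℝ v) (gradient Φ (u + r • v))) = φ' := by
      funext r
      simp [hφ'def, real_inner_comm]
    have e2 : ((innerSL ℝ v).comp (fderiv ℝ (gradient Φ) (u + s • v))) v = φ'' s := by
      simp [hφ''def, real_inner_comm]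
    rw [e2] at h3
    rw [Function.comp_def] at h3
    rw [e1] at h3
    exact h3
  have hc : (0:ℝ) ≤ ‖v‖ ^ 2 := sq_nonneg _
  have hbound : ∀ s, φ'' s ≤ ρ (φ s) * ‖v‖ ^ 2 := by
    intro s
    have h1 : φ'' s ≤ ‖(fderiv ℝ (gradient Φ) (u + s • v)) v‖ * ‖v‖ := real_inner_le_norm _ _
    have h2 : ‖(fderiv ℝ (gradient Φ) (u + s • v)) v‖ ≤
        ‖fderiv ℝ (gradient Φ) (u + s • v)‖ * ‖v‖ :=
      (fderiv ℝ (gradient Φ) (u + s • v)).le_opNorm v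
    have h3 := hHess (u + s • v)
    have h4 : (0:ℝ) ≤ ‖v‖ := norm_nonneg _
    have h5 : (0:ℝ) ≤ ‖fderiv ℝ (gradient Φ) (u + s • v)‖ := norm_nonneg _
    nlinarith
  have key := gd_step_taylor ρ θ hρpos hρmono hρdiff hθ' φ φ' φ''
    hφd hφd' (fun s => hΦnonneg _) _ hc hbound
  have hφ1 : φ 1 = Φ (u - η • gradient F u) := by
    simp [hφdef, hv, sub_eq_add_neg]
  have hφ0 : φ 0 = Φ u := by simp [hφdef]
  have hφ'0 : φ' 0 = -(η * ⟪gradient Φ u, gradient F u⟫) := by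
    simp only [hφ'def, hv, zero_smul, add_zero, inner_neg_right, real_inner_smul_right]
  have hnv : ‖v‖ ^ 2 = η ^ 2 * ‖gradient F u‖ ^ 2 := by
    rw [hv, norm_neg, norm_smul]
    simp [abs_of_nonneg hη]
    ring
  rw [hφ1, hφ0, hφ'0] at key
  have hρu : 0 < ρ (Φ u) := hρpos _ (hΦnonneg u)
  have hnum : -(η * ⟪gradient Φ u, gradient F u⟫) ≤ -(η * g (F u)) := by
    have := mul_le_mul_of_nonneg_left (hadm u) hη
    linarith
  have hdiv : -(η * ⟪gradient Φ u, gradient F u⟫) / ρ (Φ u) ≤ -(η * g (F u)) / ρ (Φ u) := by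
    rw [div_eq_mul_inv, div_eq_mul_inv]
    exact mul_le_mul_of_nonneg_right hnum (inv_nonneg.2 hρu.le)
  have hψb : ‖v‖ ^ 2 ≤ η ^ 2 * ψ (F u) := by
    rw [hnv]
    exact mul_le_mul_of_nonneg_left (hFgrad u) (sq_nonneg η)
  have hnegdiv : -(η * g (F u)) / ρ (Φ u) = -(η * g (F u) / ρ (Φ u)) := neg_div _ _
  linarith

end GDAux

/-- Convergence guarantee for gradient descent under an admissible potential and
self-bounding regularity conditions (general step size). -/
theorem gd_convergence_guarantee
    {E : Type*} [NormedAddCommGroup E] [InnerProductSpace ℝ E] [FiniteDimensional ℝ E]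
    (F Φ : E → ℝ) (hF : ContDiff ℝ 1 F) (hΦ : ContDiff ℝ 2 Φ)
    (hFnonneg : ∀ u, 0 ≤ F u) (hΦnonneg : ∀ u, 0 ≤ Φ u)
    (g ψ ζ ρ : ℝ → ℝ)
    (hgmono : MonotoneOn g (Set.Ici 0)) (hψmono : MonotoneOn ψ (Set.Ici 0))
    (hζmono : MonotoneOn ζ (Set.Ici 0))
    (hgnn : ∀ z : ℝ, 0 ≤ z → 0 ≤ g z) (hψnn : ∀ z : ℝ, 0 ≤ z → 0 ≤ ψ z)
    (hζnn : ∀ z : ℝ, 0 ≤ z → 0 ≤ ζ z)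
    (hg0 : g 0 = 0)
    (hρpos : ∀ z : ℝ, 0 ≤ z → 0 < ρ z) (hρmono : MonotoneOn ρ (Set.Ici 0))
    (hρdiff : DifferentiableOn ℝ ρ (Set.Ici 0))
    (hadm : ∀ u : E, g (F u) ≤ ⟪gradient Φ u, gradient F u⟫)
    (hFgrad : ∀ u : E, ‖gradient F u‖ ^ 2 ≤ ψ (F u))
    (hHess : ∀ u : E, ‖fderiv ℝ (gradient Φ) u‖ ≤ ρ (Φ u))
    (hFΦ : ∀ u : E, F u ≤ ζ (Φ u))
    (θ : ℝ → ℝ) (hθ0 : θ 0 = 0)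
    (hθ' : ∀ z : ℝ, 0 ≤ z → HasDerivAt θ (1 / ρ z) z)
    (η : ℝ) (hη : 0 < η) (T : ℕ) (hT : 1 ≤ T)
    (w₀ : E) (w : ℕ → E) (hw0 : w 0 = w₀)
    (hw : ∀ t : ℕ, w (t + 1) = w t - η • gradient F (w t)) :
    ∃ t ≤ T, g (F (w t)) ≤
      2 * θ (Φ w₀) * ρ (Φ w₀) / (η * T) + η * ρ (Φ w₀) * ψ (ζ (Φ w₀)) := by
  have hΦ₀nn : 0 ≤ Φ w₀ := hΦnonneg w₀
  set A := θ (Φ w₀) with hA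
  set R := ρ (Φ w₀) with hR
  set P := ψ (ζ (Φ w₀)) with hP
  have hRpos : 0 < R := hρpos _ hΦ₀nn
  have hPnn : 0 ≤ P := hψnn _ (hζnn _ hΦ₀nn)
  have hθcont : ContinuousOn θ (Set.Ici 0) := fun z hz =>
    (hθ' z hz).continuousAt.continuousWithinAt
  have hθsm : StrictMonoOn θ (Set.Ici 0) := by
    apply strictMonoOn_of_deriv_pos (convex_Ici 0) hθcont
    intro z hz
    rw [interior_Ici] at hz
    rw [(hθ' z hz.le).deriv]
    exact one_div_pos.2 (hρpos z hz.le)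
  have hθnn : ∀ z : ℝ, 0 ≤ z → 0 ≤ θ z := by
    intro z hz
    rcases eq_or_lt_of_le hz with h | h
    · rw [← h, hθ0]
    · rw [← hθ0]
      exact (hθsm (Set.mem_Ici.2 le_rfl) (Set.mem_Ici.2 hz) h).le
  have hAnn : 0 ≤ A := hθnn _ hΦ₀nn
  clear_value A R P
  have step : ∀ t : ℕ, θ (Φ (w (t + 1))) ≤
      θ (Φ (w t)) - η * g (F (w t)) / ρ (Φ (w t)) + η ^ 2 * ψ (F (w t)) / 2 := by
    intro t
    rw [hw t]
    exact gd_step F Φ hΦ hΦnonneg g ψ ρ hρpos hρmono hρdiff hadm hFgrad hHess θ hθ' η hη.le (w t)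
  by_contra hcon
  push_neg at hcon
  set B := 2 * A * R / (η * T) + η * R * P with hB
  set c0 := 2 * A / T + η ^ 2 * P / 2 with hc0
  have hTpos : (0:ℝ) < T := by
    have : (1:ℝ) ≤ T := by exact_mod_cast hT
    linarith
  have hη0 : η ≠ 0 := ne_of_gt hη
  have hT0 : (T:ℝ) ≠ 0 := ne_of_gt hTpos
  have hR0 : R ≠ 0 := ne_of_gt hRpos
  have hc0nn : 0 ≤ c0 := by
    apply add_nonneg
    · exact div_nonneg (by linarith) hTpos.le
    · exact div_nonneg (mul_nonneg (sq_nonneg η) hPnn) (by norm_num)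
  have hBR : η * B / R = 2 * A / T + η ^ 2 * P := by
    rw [hB]
    field_simp
  clear_value B c0
  have key : ∀ t : ℕ, t < T → Φ (w t) ≤ Φ w₀ → θ (Φ (w t)) ≤ A - t * c0 →
      Φ (w (t + 1)) ≤ Φ w₀ ∧ θ (Φ (w (t + 1))) < A - ((t + 1 : ℕ) : ℝ) * c0 := by
    intro t htT hΦt hθt
    have hgFnn : 0 ≤ g (F (w t)) := hgnn _ (hFnonneg _)
    have hρt : 0 < ρ (Φ (w t)) := hρpos _ (hΦnonneg _)
    have hρtR : ρ (Φ (w t)) ≤ R := by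
      rw [hR]
      exact hρmono (Set.mem_Ici.2 (hΦnonneg _)) (Set.mem_Ici.2 hΦ₀nn) hΦt
    have hdiv1 : η * g (F (w t)) / R ≤ η * g (F (w t)) / ρ (Φ (w t)) := by
      rw [div_eq_mul_inv, div_eq_mul_inv]
      apply mul_le_mul_of_nonneg_left _ (mul_nonneg hη.le hgFnn)
      exact inv_anti₀ hρt hρtR
    have hψt : ψ (F (w t)) ≤ P := by
      rw [hP]
      have h1 : F (w t) ≤ ζ (Φ (w t)) := hFΦ _
      have h2 : ζ (Φ (w t)) ≤ ζ (Φ w₀) :=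
        hζmono (Set.mem_Ici.2 (hΦnonneg _)) (Set.mem_Ici.2 hΦ₀nn) hΦt
      exact hψmono (Set.mem_Ici.2 (hFnonneg _)) (Set.mem_Ici.2 (hζnn _ hΦ₀nn)) (h1.trans h2)
    have hBt : B < g (F (w t)) := hcon t htT.le
    have hdiv2 : η * B / R < η * g (F (w t)) / R := by
      have h := mul_lt_mul_of_pos_left hBt hη
      rw [div_eq_mul_inv, div_eq_mul_inv]
      exact mul_lt_mul_of_pos_right h (inv_pos.2 hRpos)
    have h2 : η ^ 2 * ψ (F (w t)) / 2 ≤ η ^ 2 * P / 2 := by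
      have := mul_le_mul_of_nonneg_left hψt (sq_nonneg η)
      linarith
    have hθnext : θ (Φ (w (t + 1))) < A - ((t + 1 : ℕ) : ℝ) * c0 := by
      have h1 := step t
      push_cast
      have hc0eq : c0 = 2 * A / T + η ^ 2 * P / 2 := hc0
      nlinarith [h1, hdiv1, hdiv2, h2, hθt, hBR]
    refine ⟨?_, hθnext⟩
    by_contra hgt
    push_neg at hgt
    have hlt := hθsm (Set.mem_Ici.2 hΦ₀nn) (Set.mem_Ici.2 (hΦnonneg _)) hgt
    have hc0' : 0 ≤ ((t + 1 : ℕ) : ℝ) * c0 := mul_nonneg (by positivity) hc0nn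
    linarith [hθnext]
  have ind : ∀ t : ℕ, t ≤ T → Φ (w t) ≤ Φ w₀ ∧ θ (Φ (w t)) ≤ A - t * c0 := by
    intro t
    induction t with
    | zero =>
      intro _
      rw [hw0]
      refine ⟨le_rfl, ?_⟩
      simp [hA]
    | succ n ih =>
      intro h
      have hn : n ≤ T := Nat.le_of_succ_le h
      obtain ⟨h1, h2⟩ := ih hn
      have hk := key n (by omega) h1 h2
      exact ⟨hk.1, hk.2.le⟩
  obtain ⟨h1, h2⟩ := ind (T - 1) (by omega)
  have hfin := key (T - 1) (by omega) h1 h2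
  have hTe : (T - 1 : ℕ) + 1 = T := by omega
  rw [hTe] at hfin
  have hθTnn : 0 ≤ θ (Φ (w T)) := hθnn _ (hΦnonneg _)
  have h3 := hfin.2
  have hTc : (T:ℝ) * c0 = 2 * A + (T:ℝ) * (η ^ 2 * P / 2) := by
    rw [hc0]
    field_simp
  have h4 : 0 ≤ (T:ℝ) * (η ^ 2 * P / 2) :=
    mul_nonneg hTpos.le (div_nonneg (mul_nonneg (sq_nonneg η) hPnn) (by norm_num))
  linarith
end

section
/- Let E be a finite-dimensional real inner product space. Let F : E → ℝ be continuously differentiable with F ≥ 0 and Φ : E → ℝ twice continuously differentiable with Φ ≥ 0. Let g, ψ, ζ : [0,∞) → [0,∞) be monotone nondecreasing with g(0) = 0 and g(z) > 0, ψ(z) > 0 for z > 0, and let ρ : [0,∞) → (0,∞) be differentiable and monotone nondecreasing. Assume: (i) ⟨∇Φ(u), ∇F(u)⟩ ≥ g(F(u)) for all u ∈ E; (ii) ‖∇F(u)‖² ≤ ψ(F(u)) for all u; (iii) ‖∇²Φ(u)‖ ≤ ρ(Φ(u)) for all u; (iv) F(u) ≤ ζ(Φ(u)) for all u; (v) the map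 z ↦ ψ(z)/g(z) is monotone nondecreasing on (0,∞). Let θ : [0,∞) → ℝ have θ(0) = 0 and θ'(z) = 1/ρ(z) for all z ≥ 0. Then for every initial point w₀ with ζ(Φ(w₀)) > 0, every T ≥ 1, and every step size η with 0 < η ≤ g(ζ(Φ(w₀))) / (ψ(ζ(Φ(w₀)))·ρ(Φ(w₀))), the gradient descent iterates w_{t+1} = w_t − η∇F(w_t) satisfy min_{0 ≤ t ≤ T} g(F(w_t)) ≤ 2θ(Φ(w₀))ρ(Φ(w₀)) / (ηT). -/
open RealInnerProductSpace

private lemma taylor_aux {f f' f'' : ℝ → ℝ} {K : ℝ}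
    (hf : ∀ s, HasDerivAt f (f' s) s) (hf' : ∀ s, HasDerivAt f' (f'' s) s)
    (hK : ∀ s, f'' s ≤ K) : f 1 ≤ f 0 + f' 0 + K / 2 := by
  have hcf' : Continuous f' := by
    rw [continuous_iff_continuousAt]; exact fun s => (hf' s).continuousAt
  have hcf : Continuous f := by
    rw [continuous_iff_continuousAt]; exact fun s => (hf s).continuousAt
  have h1 : ∀ s ∈ Set.Icc (0:ℝ) 1, f' s ≤ f' 0 + K * s := by
    have hanti : AntitoneOn (fun s => f' s - f' 0 - K * s) (Set.Icc 0 1) := by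
      apply antitoneOn_of_hasDerivWithinAt_nonpos (convex_Icc 0 1)
        (f' := fun s => f'' s - K)
      · exact ((hcf'.sub continuous_const).sub (continuous_const.mul continuous_id)).continuousOn
      · intro s hs
        have : HasDerivAt (fun s => f' s - f' 0 - K * s) (f'' s - K) s := by
          exact (((hf' s).sub_const (f' 0)).sub ((hasDerivAt_id s).const_mul K)).congr_deriv (by ring)
        exact this.hasDerivWithinAt
      · intro s _; simpa using hK s
    intro s hs
    have h0 : (0:ℝ) ∈ Set.Icc (0:ℝ) 1 := by constructor <;> norm_num
    have := hanti h0 hs hs.1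
    simp only [mul_zero, sub_zero] at this
    linarith
  have hanti2 : AntitoneOn (fun s => f s - f 0 - f' 0 * s - K * s ^ 2 / 2) (Set.Icc 0 1) := by
    apply antitoneOn_of_hasDerivWithinAt_nonpos (convex_Icc 0 1)
      (f' := fun s => f' s - f' 0 - K * s)
    · apply Continuous.continuousOn
      continuity
    · intro s hs
      have : HasDerivAt (fun s => f s - f 0 - f' 0 * s - K * s ^ 2 / 2)
          (f' s - f' 0 - K * s) s := by
        have hp : HasDerivAt (fun s : ℝ => K * s ^ 2 / 2) (K * s) s := by
          have := ((hasDerivAt_pow 2 s).const_mul K).div_const 2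
          exact this.congr_deriv (by norm_num; ring)
        have := (((hf s).sub_const (f 0)).sub ((hasDerivAt_id s).const_mul (f' 0))).sub hp
        exact this.congr_deriv (by ring)
      exact this.hasDerivWithinAt
    · intro s hs
      have hs' : s ∈ Set.Icc (0:ℝ) 1 := interior_subset hs
      have := h1 s hs'
      linarith
  have h0 : (0:ℝ) ∈ Set.Icc (0:ℝ) 1 := by constructor <;> norm_num
  have h1' : (1:ℝ) ∈ Set.Icc (0:ℝ) 1 := by constructor <;> norm_num
  have := hanti2 h0 h1' zero_le_one
  simp only [mul_zero, mul_one, sub_zero, one_pow] at this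
  norm_num at this
  linarith

private lemma derivWithin_nonneg_of_monoOn {ρ : ℝ → ℝ} (hmono : MonotoneOn ρ (Set.Ici 0))
    {x : ℝ} (hx : (0:ℝ) ≤ x) (hd : DifferentiableWithinAt ℝ ρ (Set.Ici 0) x) :
    0 ≤ derivWithin ρ (Set.Ici 0) x := by
  have h := hd.hasDerivWithinAt
  rw [hasDerivWithinAt_iff_tendsto_slope] at h
  have hsub : Set.Ioi x ⊆ Set.Ici 0 \ {x} := fun z hz =>
    ⟨hx.trans (le_of_lt hz), by simp only [Set.mem_singleton_iff]; exact ne_of_gt hz⟩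
  have h2 : Filter.Tendsto (slope ρ x) (nhdsWithin x (Set.Ioi x))
      (nhds (derivWithin ρ (Set.Ici 0) x)) := h.mono_left (nhdsWithin_mono x hsub)
  refine ge_of_tendsto h2 ?_
  filter_upwards [self_mem_nhdsWithin] with z hz
  rw [slope_def_field]
  have hz' : x < z := hz
  exact div_nonneg (sub_nonneg.2 (hmono hx (hx.trans hz'.le) hz'.le)) (by linarith)


/-- Improved `O(1/T)` convergence guarantee for gradient descent when `ψ/g` is
monotone nondecreasing, for any sufficiently small step size. -/
theorem gd_convergence_guarantee_fast
    {E : Type*} [NormedAddCommGroup E] [InnerProductSpace ℝ E] [FiniteDimensional ℝ E]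
    (F Φ : E → ℝ) (hF : ContDiff ℝ 1 F) (hΦ : ContDiff ℝ 2 Φ)
    (hFnonneg : ∀ u, 0 ≤ F u) (hΦnonneg : ∀ u, 0 ≤ Φ u)
    (g ψ ζ ρ : ℝ → ℝ)
    (hgmono : MonotoneOn g (Set.Ici 0)) (hψmono : MonotoneOn ψ (Set.Ici 0))
    (hζmono : MonotoneOn ζ (Set.Ici 0))
    (hgnn : ∀ z : ℝ, 0 ≤ z → 0 ≤ g z) (hψnn : ∀ z : ℝ, 0 ≤ z → 0 ≤ ψ z)
    (hζnn : ∀ z : ℝ, 0 ≤ z → 0 ≤ ζ z)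
    (hg0 : g 0 = 0)
    (hgpos : ∀ z : ℝ, 0 < z → 0 < g z) (hψpos : ∀ z : ℝ, 0 < z → 0 < ψ z)
    (hρpos : ∀ z : ℝ, 0 ≤ z → 0 < ρ z) (hρmono : MonotoneOn ρ (Set.Ici 0))
    (hρdiff : DifferentiableOn ℝ ρ (Set.Ici 0))
    (hadm : ∀ u : E, g (F u) ≤ ⟪gradient Φ u, gradient F u⟫)
    (hFgrad : ∀ u : E, ‖gradient F u‖ ^ 2 ≤ ψ (F u))
    (hHess : ∀ u : E, ‖fderiv ℝ (gradient Φ) u‖ ≤ ρ (Φ u))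
    (hFΦ : ∀ u : E, F u ≤ ζ (Φ u))
    (hψg : MonotoneOn (fun z => ψ z / g z) (Set.Ioi 0))
    (θ : ℝ → ℝ) (hθ0 : θ 0 = 0)
    (hθ' : ∀ z : ℝ, 0 ≤ z → HasDerivAt θ (1 / ρ z) z)
    (w₀ : E) (hζΦpos : 0 < ζ (Φ w₀))
    (T : ℕ) (hT : 1 ≤ T)
    (η : ℝ) (hηpos : 0 < η)
    (hηle : η ≤ g (ζ (Φ w₀)) / (ψ (ζ (Φ w₀)) * ρ (Φ w₀)))
    (w : ℕ → E) (hw0 : w 0 = w₀)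
    (hw : ∀ t : ℕ, w (t + 1) = w t - η • gradient F (w t)) :
    ∃ t ≤ T, g (F (w t)) ≤ 2 * θ (Φ w₀) * ρ (Φ w₀) / (η * T) := by
  have hρ0pos : 0 < ρ (Φ w₀) := hρpos _ (hΦnonneg w₀)
  have hΦdiff : Differentiable ℝ Φ := hΦ.differentiable (by norm_num)
  have hgradC : ContDiff ℝ 1 (gradient Φ) := by
    have h1 : ContDiff ℝ 1 (fderiv ℝ Φ) := hΦ.fderiv_right (by norm_num)
    exact ((InnerProductSpace.toDual ℝ E).symm.contDiff).comp h1
  have hgradΦdiff : Differentiable ℝ (gradient Φ) := hgradC.differentiable (by norm_num)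
  -- θ is strictly monotone on [0, ∞)
  have hθmono : StrictMonoOn θ (Set.Ici 0) := by
    apply strictMonoOn_of_deriv_pos (convex_Ici 0)
    · exact fun z hz => ((hθ' z hz).continuousAt).continuousWithinAt
    · intro z hz
      rw [interior_Ici] at hz
      rw [(hθ' z (le_of_lt hz)).deriv]
      exact div_pos one_pos (hρpos z (le_of_lt hz))
  have hθnonneg : ∀ z : ℝ, 0 ≤ z → 0 ≤ θ z := by
    intro z hz
    rcases eq_or_lt_of_le hz with h | h
    · rw [← h, hθ0]
    · have := hθmono (Set.self_mem_Ici) hz h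
      rw [hθ0] at this; exact this.le
  have hθle : ∀ a b : ℝ, 0 ≤ a → 0 ≤ b → θ a ≤ θ b → a ≤ b := by
    intro a b ha hb h
    by_contra hab
    push_neg at hab
    exact absurd (hθmono hb ha hab) (not_lt.2 h)
  -- key one-step estimate
  have key : ∀ x : E, Φ x ≤ Φ w₀ →
      θ (Φ (x - η • gradient F x)) + η * g (F x) / (2 * ρ (Φ w₀)) ≤ θ (Φ x) := by
    intro x hx
    by_cases hF0 : F x = 0
    · have hmin : IsLocalMin F x :=
        Filter.Eventually.of_forall fun y => by rw [hF0]; exact hFnonneg y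
      have hgz : gradient F x = 0 := by
        show (InnerProductSpace.toDual ℝ E).symm (fderiv ℝ F x) = 0
        rw [hmin.fderiv_eq_zero]; simp
      rw [hF0, hg0, hgz]
      simp
    have hFx : 0 < F x := lt_of_le_of_ne (hFnonneg x) (Ne.symm hF0)
    have hζx : F x ≤ ζ (Φ w₀) := (hFΦ x).trans (hζmono (hΦnonneg x) (hΦnonneg w₀) hx)
    -- step size is small enough locally
    have hηG : η * ψ (F x) * ρ (Φ w₀) ≤ g (F x) := by
      have hgF : 0 < g (F x) := hgpos _ hFx
      have hgz : 0 < g (ζ (Φ w₀)) := hgpos _ hζΦpos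
      have hψz : 0 < ψ (ζ (Φ w₀)) := hψpos _ hζΦpos
      have hψF : 0 ≤ ψ (F x) := hψnn _ hFx.le
      have h1 : ψ (F x) / g (F x) ≤ ψ (ζ (Φ w₀)) / g (ζ (Φ w₀)) :=
        hψg (Set.mem_Ioi.2 hFx) (Set.mem_Ioi.2 hζΦpos) hζx
      have h2 : η * (ψ (ζ (Φ w₀)) * ρ (Φ w₀)) ≤ g (ζ (Φ w₀)) :=
        (le_div_iff₀ (by positivity)).1 hηle
      rw [div_le_div_iff₀ hgF hgz] at h1
      nlinarith [mul_le_mul_of_nonneg_left h2 hψF]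
    set v : E := gradient F x with hv
    set d : E := -(η • v) with hd
    set c : ℝ → E := fun s => x + s • d with hcdef
    have hc0 : c 0 = x := by simp [hcdef]
    have hc1 : c 1 = x - η • v := by simp [hcdef, hd, sub_eq_add_neg]
    have hcd : ∀ s : ℝ, HasDerivAt c d s := by
      intro s
      have := ((hasDerivAt_id s).smul_const d).const_add x
      exact this.congr_deriv (by simp)
    have hφnn : ∀ s : ℝ, 0 ≤ Φ (c s) := fun s => hΦnonneg _
    have hρc : ∀ s : ℝ, 0 < ρ (Φ (c s)) := fun s => hρpos _ (hφnn s)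
    have hgradat : ∀ u : E, HasFDerivAt Φ ((InnerProductSpace.toDual ℝ E) (gradient Φ u)) u := by
      intro u
      have h := (hΦdiff u).hasFDerivAt
      have : (InnerProductSpace.toDual ℝ E) (gradient Φ u) = fderiv ℝ Φ u :=
        (InnerProductSpace.toDual ℝ E).apply_symm_apply _
      rwa [this]
    have hφ' : ∀ s : ℝ, HasDerivAt (fun s => Φ (c s)) (⟪gradient Φ (c s), d⟫) s := by
      intro s
      have h := (hgradat (c s)).comp_hasDerivAt s (hcd s)
      exact h.congr_deriv (by rw [InnerProductSpace.toDual_apply_apply])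
    have hφ'' : ∀ s : ℝ, HasDerivAt (fun s => (⟪gradient Φ (c s), d⟫ : ℝ))
        (⟪(fderiv ℝ (gradient Φ) (c s)) d, d⟫) s := by
      intro s
      have h1 : HasDerivAt (fun s => gradient Φ (c s)) ((fderiv ℝ (gradient Φ) (c s)) d) s :=
        ((hgradΦdiff (c s)).hasFDerivAt).comp_hasDerivAt s (hcd s)
      have h2 := h1.inner ℝ (hasDerivAt_const s d)
      simpa using h2
    -- derivative of ρ ∘ Φ ∘ c
    have hρφ : ∀ s : ℝ, HasDerivAt (fun s => ρ (Φ (c s)))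
        (derivWithin ρ (Set.Ici 0) (Φ (c s)) * ⟪gradient Φ (c s), d⟫) s := by
      intro s
      have h := (hρdiff _ (hφnn s)).hasDerivWithinAt
      have h2 := h.scomp_hasDerivAt s (hφ' s) (fun t => hφnn t)
      exact h2.congr_deriv (by simp only [smul_eq_mul]; ring)
    set B : ℝ → ℝ := fun s => (⟪gradient Φ (c s), d⟫ : ℝ) with hB
    set K : ℝ := η ^ 2 * ψ (F x) with hK
    have hΘ' : ∀ s : ℝ, HasDerivAt (fun s => θ (Φ (c s))) ((ρ (Φ (c s)))⁻¹ * B s) s := by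
      intro s
      have := (hθ' _ (hφnn s)).comp s (hφ' s)
      exact this.congr_deriv (by simp [one_div, hB])
    have hΘ'' : ∀ s : ℝ, HasDerivAt (fun s => (ρ (Φ (c s)))⁻¹ * B s)
        (-(derivWithin ρ (Set.Ici 0) (Φ (c s)) * B s) / (ρ (Φ (c s))) ^ 2 * B s
          + (ρ (Φ (c s)))⁻¹ * (⟪(fderiv ℝ (gradient Φ) (c s)) d, d⟫ : ℝ)) s := by
      intro s
      exact ((hρφ s).inv (ne_of_gt (hρc s))).mul (hφ'' s)
    have hbound : ∀ s : ℝ,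
        -(derivWithin ρ (Set.Ici 0) (Φ (c s)) * B s) / (ρ (Φ (c s))) ^ 2 * B s
          + (ρ (Φ (c s)))⁻¹ * (⟪(fderiv ℝ (gradient Φ) (c s)) d, d⟫ : ℝ) ≤ K := by
      intro s
      have hρ'nn : 0 ≤ derivWithin ρ (Set.Ici 0) (Φ (c s)) :=
        derivWithin_nonneg_of_monoOn hρmono (hφnn s) (hρdiff _ (hφnn s))
      have ht1 : -(derivWithin ρ (Set.Ici 0) (Φ (c s)) * B s) / (ρ (Φ (c s))) ^ 2 * B s ≤ 0 := by
        have heq : -(derivWithin ρ (Set.Ici 0) (Φ (c s)) * B s) / (ρ (Φ (c s))) ^ 2 * B s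
            = -((derivWithin ρ (Set.Ici 0) (Φ (c s)) * (B s * B s)) / (ρ (Φ (c s))) ^ 2) := by
          ring
        rw [heq, neg_nonpos]
        exact div_nonneg (mul_nonneg hρ'nn (mul_self_nonneg _)) (sq_nonneg _)
      have hdnorm : ‖d‖ ^ 2 ≤ η ^ 2 * ψ (F x) := by
        have : ‖d‖ = η * ‖v‖ := by
          rw [hd, norm_neg, norm_smul, Real.norm_eq_abs, abs_of_pos hηpos]
        rw [this, mul_pow]
        exact mul_le_mul_of_nonneg_left (hFgrad x) (by positivity)
      have hinner : (⟪(fderiv ℝ (gradient Φ) (c s)) d, d⟫ : ℝ) ≤ ρ (Φ (c s)) * K := by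
        calc (⟪(fderiv ℝ (gradient Φ) (c s)) d, d⟫ : ℝ)
            ≤ ‖(fderiv ℝ (gradient Φ) (c s)) d‖ * ‖d‖ := real_inner_le_norm _ _
          _ ≤ ‖fderiv ℝ (gradient Φ) (c s)‖ * ‖d‖ * ‖d‖ :=
              mul_le_mul_of_nonneg_right ((fderiv ℝ (gradient Φ) (c s)).le_opNorm d)
                (norm_nonneg _)
          _ = ‖fderiv ℝ (gradient Φ) (c s)‖ * ‖d‖ ^ 2 := by ring
          _ ≤ ρ (Φ (c s)) * (η ^ 2 * ψ (F x)) := by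
              apply mul_le_mul (hHess (c s)) hdnorm (sq_nonneg _)
                (le_of_lt (hρc s))
          _ = ρ (Φ (c s)) * K := by rw [hK]
      have ht2 : (ρ (Φ (c s)))⁻¹ * (⟪(fderiv ℝ (gradient Φ) (c s)) d, d⟫ : ℝ) ≤ K := by
        rw [inv_mul_le_iff₀ (hρc s)]
        exact hinner
      linarith
    have main_ineq := taylor_aux hΘ' hΘ'' hbound
    -- now estimate the first-derivative term at 0
    have hB0 : B 0 ≤ -(η * g (F x)) := by
      have : B 0 = -(η * ⟪gradient Φ x, v⟫) := by
        rw [hB]; simp only [hc0, hd]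
        rw [inner_neg_right, real_inner_smul_right]
      rw [this, neg_le_neg_iff]
      exact mul_le_mul_of_nonneg_left (hadm x) hηpos.le
    have hρxle : ρ (Φ x) ≤ ρ (Φ w₀) := hρmono (hΦnonneg x) (hΦnonneg w₀) hx
    have hρxpos : 0 < ρ (Φ x) := hρpos _ (hΦnonneg x)
    have hgFnn : 0 ≤ g (F x) := hgnn _ (hFnonneg x)
    have hterm : (ρ (Φ (c 0)))⁻¹ * B 0 ≤ -(η * g (F x) / ρ (Φ w₀)) := by
      rw [hc0]
      have h1 : (ρ (Φ x))⁻¹ * B 0 ≤ (ρ (Φ x))⁻¹ * (-(η * g (F x))) :=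
        mul_le_mul_of_nonneg_left hB0 (by positivity)
      have h2 : (ρ (Φ x))⁻¹ * (-(η * g (F x))) ≤ -(η * g (F x) / ρ (Φ w₀)) := by
        rw [mul_neg, neg_le_neg_iff, inv_mul_eq_div]
        gcongr
      linarith
    have hK2 : K / 2 ≤ η * g (F x) / (2 * ρ (Φ w₀)) := by
      rw [hK, div_le_div_iff₀ (by norm_num) (by positivity)]
      nlinarith [mul_le_mul_of_nonneg_left hηG hηpos.le]
    -- combine
    have hfinal : θ (Φ (c 1)) ≤ θ (Φ (c 0)) + (-(η * g (F x) / ρ (Φ w₀)))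
        + η * g (F x) / (2 * ρ (Φ w₀)) := by
      calc θ (Φ (c 1)) ≤ θ (Φ (c 0)) + (ρ (Φ (c 0)))⁻¹ * B 0 + K / 2 := main_ineq
        _ ≤ _ := by linarith
    rw [hc0, hc1] at hfinal
    have : η * g (F x) / ρ (Φ w₀) = 2 * (η * g (F x) / (2 * ρ (Φ w₀))) := by
      field_simp
    rw [hv] at hfinal
    linarith [hfinal, this ▸ hfinal]
  -- induction along the iterates
  have main : ∀ t : ℕ, Φ (w t) ≤ Φ w₀ ∧
      θ (Φ (w t)) + (∑ i ∈ Finset.range t, η * g (F (w i)) / (2 * ρ (Φ w₀))) ≤ θ (Φ w₀) := by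
    intro t
    induction t with
    | zero => simp [hw0]
    | succ n ih =>
      have hk := key (w n) ih.1
      rw [← hw n] at hk
      have hsumnn : 0 ≤ ∑ i ∈ Finset.range n, η * g (F (w i)) / (2 * ρ (Φ w₀)) := by
        apply Finset.sum_nonneg
        intro i _
        have := hgnn _ (hFnonneg (w i))
        positivity
      have hterm_nn : 0 ≤ η * g (F (w n)) / (2 * ρ (Φ w₀)) := by
        have := hgnn _ (hFnonneg (w n))
        positivity
      constructor
      · apply hθle _ _ (hΦnonneg _) (hΦnonneg _)
        linarith [ih.2]
      · rw [Finset.sum_range_succ]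
        linarith [ih.2]
  -- extract the minimum
  obtain ⟨i, hiT, himin⟩ := Finset.exists_min_image (Finset.range T)
    (fun j => g (F (w j))) ⟨0, Finset.mem_range.2 (by omega)⟩
  have hiT' : i < T := Finset.mem_range.1 hiT
  refine ⟨i, hiT'.le, ?_⟩
  have hTpos : (0:ℝ) < (T:ℝ) := by exact_mod_cast Nat.pos_of_ne_zero (by omega)
  have hsum_ge : (T:ℝ) * g (F (w i)) ≤ ∑ j ∈ Finset.range T, g (F (w j)) := by
    calc (T:ℝ) * g (F (w i)) = ∑ _j ∈ Finset.range T, g (F (w i)) := by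
          rw [Finset.sum_const, Finset.card_range, nsmul_eq_mul]
      _ ≤ ∑ j ∈ Finset.range T, g (F (w j)) := Finset.sum_le_sum fun j hj => himin j hj
  have hS : ∑ j ∈ Finset.range T, η * g (F (w j)) / (2 * ρ (Φ w₀)) ≤ θ (Φ w₀) := by
    have h := (main T).2
    have := hθnonneg _ (hΦnonneg (w T))
    linarith
  have hSeq : ∑ j ∈ Finset.range T, η * g (F (w j)) / (2 * ρ (Φ w₀))
      = η / (2 * ρ (Φ w₀)) * ∑ j ∈ Finset.range T, g (F (w j)) := by
    rw [Finset.mul_sum]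
    apply Finset.sum_congr rfl
    intro j _
    ring
  rw [hSeq] at hS
  have hS' : η * (∑ j ∈ Finset.range T, g (F (w j))) ≤ 2 * ρ (Φ w₀) * θ (Φ w₀) := by
    rw [div_mul_eq_mul_div, div_le_iff₀ (by positivity)] at hS
    linarith
  rw [le_div_iff₀ (by positivity)]
  nlinarith [mul_le_mul_of_nonneg_left hsum_ge hηpos.le]
end

section
/- Let E be a finite-dimensional real inner product space, F, Φ : E → ℝ differentiable with F ≥ 0 and Φ ≥ 0, g : [0,∞) → [0,∞) monotone nondecreasing with g(0) = 0, and ψ : [0,∞) → (0,∞) monotone nondecreasing with ‖∇F(u)‖² ≤ ψ(F(u)) for all u ∈ E. Let σ : [0,∞) → ℝ be the function with σ(0) = 0 and σ'(z) = g(z)/ψ(z) for all z ≥ 0. Let w : [0,∞) → E be a gradient-flow trajectory of F such that F(w(t)) → 0 and Φ(w(t)) → 0 as t → ∞, and such that ⟨∇Φ(w(t)), ∇F(w(t))⟩ ≥ g(F(w(t))) for all t ≥ 0. Then σ(F(w(0))) ≤ Φ(w(0)). -/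
open RealInnerProductSpace Filter Set Topology

/-!
`L(t) = Φ(w(t)) - σ(F(w(t)))` is a Lyapunov function for the gradient flow: by the chain rule
`L' = σ'(F) ‖∇F‖² - ⟪∇Φ, ∇F⟫ ≤ (g(F)/ψ(F)) ψ(F) - g(F) = 0`, so `L` is antitone on `[0, ∞)`.
Since `Φ(w(t)) → 0` and `F(w(t)) → 0`, `L(t) → 0 - σ(0) = 0`, this gives `L(0) ≥ 0`.
-/

theorem le_of_tendsto_of_hasDerivAt_nonpos {L L' : ℝ → ℝ} {a l : ℝ}
    (hL : ∀ t, a ≤ t → HasDerivAt L (L' t) t) (hL' : ∀ t, a ≤ t → L' t ≤ 0)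
    (hlim : Tendsto L atTop (𝓝 l)) : l ≤ L a := by
  have hanti : AntitoneOn L (Ici a) :=
    antitoneOn_of_hasDerivWithinAt_nonpos (convex_Ici a)
      (fun t ht => (hL t ht).continuousAt.continuousWithinAt)
      (fun t ht => (hL t (interior_subset ht)).hasDerivWithinAt)
      (fun t ht => hL' t (interior_subset ht))
  refine le_of_tendsto hlim ?_
  filter_upwards [eventually_ge_atTop a] with t ht
  exact hanti self_mem_Ici ht ht

section GradientFlow

variable {E : Type*} [NormedAddCommGroup E] [InnerProductSpace ℝ E] [CompleteSpace E]

theorem HasGradientAt.hasDerivAt_comp {f : E → ℝ} {f' : E} {γ : ℝ → E} {γ' : E} {t : ℝ}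
    (hf : HasGradientAt f f' (γ t)) (hγ : HasDerivAt γ γ' t) :
    HasDerivAt (fun s => f (γ s)) ⟪f', γ'⟫ t :=
  hf.hasFDerivAt.comp_hasDerivAt t hγ

theorem DifferentiableAt.hasDerivAt_comp_gradientFlow {f F : E → ℝ} {w : ℝ → E} {t : ℝ}
    (hf : DifferentiableAt ℝ f (w t)) (hw : HasDerivAt w (-gradient F (w t)) t) :
    HasDerivAt (fun s => f (w s)) (-⟪gradient f (w t), gradient F (w t)⟫) t := by
  simpa only [inner_neg_right] using hf.hasGradientAt.hasDerivAt_comp hw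

theorem hasDerivAt_sub_comp_gradientFlow {F Φ : E → ℝ} {σ : ℝ → ℝ} {w : ℝ → E} {t s : ℝ}
    (hF : DifferentiableAt ℝ F (w t)) (hΦ : DifferentiableAt ℝ Φ (w t))
    (hσ : HasDerivAt σ s (F (w t))) (hw : HasDerivAt w (-gradient F (w t)) t) :
    HasDerivAt (fun t => Φ (w t) - σ (F (w t)))
      (s * ‖gradient F (w t)‖ ^ 2 - ⟪gradient Φ (w t), gradient F (w t)⟫) t := by
  have hFw := hF.hasDerivAt_comp_gradientFlow hw
  rw [real_inner_self_eq_norm_sq] at hFw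
  exact ((hΦ.hasDerivAt_comp_gradientFlow hw).sub (hσ.comp t hFw)).congr_deriv (by ring)

end GradientFlow

theorem div_mul_le_of_le {a b c : ℝ} (ha : 0 ≤ a) (hb : 0 < b) (hc : c ≤ b) : a / b * c ≤ a :=
  (mul_le_mul_of_nonneg_left hc (div_nonneg ha hb.le)).trans_eq (div_mul_cancel₀ a hb.ne')

theorem potential_dominates_sigma_of_F_general
    {E : Type*} [NormedAddCommGroup E] [InnerProductSpace ℝ E] [FiniteDimensional ℝ E]
    (F Φ : E → ℝ) (hF : Differentiable ℝ F) (hΦ : Differentiable ℝ Φ)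
    (hFnonneg : ∀ u, 0 ≤ F u)
    (g ψ : ℝ → ℝ)
    (hgnn : ∀ z : ℝ, 0 ≤ z → 0 ≤ g z)
    (hψpos : ∀ z : ℝ, 0 ≤ z → 0 < ψ z)
    (hFgrad : ∀ u : E, ‖gradient F u‖ ^ 2 ≤ ψ (F u))
    (σ : ℝ → ℝ) (hσ0 : σ 0 = 0)
    (hσ' : ∀ z : ℝ, 0 ≤ z → HasDerivAt σ (g z / ψ z) z)
    (w : ℝ → E)
    (hw : ∀ t : ℝ, 0 ≤ t → HasDerivAt w (-gradient F (w t)) t)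
    (hFlim : Filter.Tendsto (fun t => F (w t)) Filter.atTop (nhds 0))
    (hΦlim : Filter.Tendsto (fun t => Φ (w t)) Filter.atTop (nhds 0))
    (hadm : ∀ t : ℝ, 0 ≤ t → g (F (w t)) ≤ ⟪gradient Φ (w t), gradient F (w t)⟫) :
    σ (F (w 0)) ≤ Φ (w 0) := by
  have hL (t : ℝ) (ht : 0 ≤ t) := hasDerivAt_sub_comp_gradientFlow (hF (w t)) (hΦ (w t))
    (hσ' (F (w t)) (hFnonneg (w t))) (hw t ht)
  have hL' (t : ℝ) (ht : 0 ≤ t) :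
      g (F (w t)) / ψ (F (w t)) * ‖gradient F (w t)‖ ^ 2
        - ⟪gradient Φ (w t), gradient F (w t)⟫ ≤ 0 := by
    have := div_mul_le_of_le (hgnn _ (hFnonneg (w t))) (hψpos _ (hFnonneg (w t))) (hFgrad (w t))
    linarith [hadm t ht]
  have hσlim : Tendsto (fun t => σ (F (w t))) atTop (𝓝 0) :=
    hσ0 ▸ (hσ' 0 le_rfl).continuousAt.tendsto.comp hFlim
  have hlim := le_of_tendsto_of_hasDerivAt_nonpos hL hL' (by simpa using hΦlim.sub hσlim)
  linarith

/-- Joint self-bounding relation between an objective and an admissible potential: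
`σ(F(w(0))) ≤ Φ(w(0))` along a converging gradient-flow trajectory. -/
theorem potential_dominates_sigma_of_F
    {E : Type*} [NormedAddCommGroup E] [InnerProductSpace ℝ E] [FiniteDimensional ℝ E]
    (F Φ : E → ℝ) (hF : Differentiable ℝ F) (hΦ : Differentiable ℝ Φ)
    (hFnonneg : ∀ u, 0 ≤ F u) (hΦnonneg : ∀ u, 0 ≤ Φ u)
    (g ψ : ℝ → ℝ)
    (hgmono : MonotoneOn g (Set.Ici 0)) (hgnn : ∀ z : ℝ, 0 ≤ z → 0 ≤ g z)
    (hg0 : g 0 = 0)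
    (hψmono : MonotoneOn ψ (Set.Ici 0)) (hψpos : ∀ z : ℝ, 0 ≤ z → 0 < ψ z)
    (hFgrad : ∀ u : E, ‖gradient F u‖ ^ 2 ≤ ψ (F u))
    (σ : ℝ → ℝ) (hσ0 : σ 0 = 0)
    (hσ' : ∀ z : ℝ, 0 ≤ z → HasDerivAt σ (g z / ψ z) z)
    (w : ℝ → E)
    (hw : ∀ t : ℝ, 0 ≤ t → HasDerivAt w (-gradient F (w t)) t)
    (hFlim : Filter.Tendsto (fun t => F (w t)) Filter.atTop (nhds 0))
    (hΦlim : Filter.Tendsto (fun t => Φ (w t)) Filter.atTop (nhds 0))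
    (hadm : ∀ t : ℝ, 0 ≤ t → g (F (w t)) ≤ ⟪gradient Φ (w t), gradient F (w t)⟫) :
    σ (F (w 0)) ≤ Φ (w 0) :=
  potential_dominates_sigma_of_F_general F Φ hF hΦ hFnonneg g ψ hgnn hψpos hFgrad σ hσ0 hσ' w hw
    hFlim hΦlim hadm
end

section
/- Let E be a finite-dimensional real inner product space, Φ : E → ℝ twice continuously differentiable with Φ ≥ 0, and ρ : [0,∞) → (0,∞) differentiable and monotone nondecreasing such that the operator norm of the Hessian satisfies ‖∇²Φ(u)‖ ≤ ρ(Φ(u)) for all u ∈ E. Let θ : [0,∞) → ℝ be the function with θ(0) = 0 and θ'(z) = 1/ρ(z) for all z ≥ 0. Then: (1) for all w, u ∈ E, θ(Φ(w + u)) ≤ θ(Φ(w)) + ⟨∇Φ(w), u⟩/ρ(Φ(w)) + ‖u‖²/2; and (2) for all w ∈ E, ‖∇Φ(w)‖ ≤ ρ(Φ(w))·√(2θ(Φ(w))). -/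
/-
Along the line `t ↦ w + t • u`, the function `g t = θ (Φ (w + t • u))` has
`g' = ⟪∇Φ, u⟫ / ρ (Φ)` and `g'' = ⟪∇²Φ u, u⟫ / ρ (Φ) - ⟪∇Φ, u⟫ ^ 2 ρ' (Φ) / ρ (Φ) ^ 2`.
The Hessian bound makes the first term at most `‖u‖ ^ 2` and monotonicity of `ρ` makes the
second one nonnegative, so `g'' ≤ ‖u‖ ^ 2` and a second-order Taylor bound gives the one-sided
inequality. Since `θ ≥ 0` on `[0, ∞)`, taking `u = -∇Φ(w) / ρ(Φ(w))` yields the gradient bound.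
-/

open RealInnerProductSpace Set

theorem le_add_deriv_add_half_of_hasDerivAt_le {g g' g'' : ℝ → ℝ} {L : ℝ}
    (hg : ∀ t, HasDerivAt g (g' t) t) (hg' : ∀ t, HasDerivAt g' (g'' t) t)
    (hL : ∀ t, g'' t ≤ L) : g 1 ≤ g 0 + g' 0 + L / 2 := by
  have hg'_le : ∀ t, 0 ≤ t → g' t ≤ g' 0 + L * t := by
    have : Antitone fun t => g' t - L * t :=
      antitone_of_hasDerivAt_nonpos
        (fun t => ((hg' t).sub ((hasDerivAt_id t).const_mul L)).congr_deriv (by ring))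
        (fun t => sub_nonpos.2 (hL t))
    intro t ht
    linarith [this ht]
  have hK : ∀ t, HasDerivAt (fun s => g s - g' 0 * s - L / 2 * s ^ 2) (g' t - g' 0 - L * t) t :=
    fun t => (((hg t).sub ((hasDerivAt_id t).const_mul (g' 0))).sub
      ((hasDerivAt_pow 2 t).const_mul (L / 2))).congr_deriv (by ring)
  have : AntitoneOn (fun s => g s - g' 0 * s - L / 2 * s ^ 2) (Ici 0) := by
    refine antitoneOn_of_hasDerivWithinAt_nonpos (convex_Ici 0)
      (fun t _ => (hK t).continuousAt.continuousWithinAt) (fun t _ => (hK t).hasDerivWithinAt) ?_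
    intro t ht
    rw [interior_Ici] at ht
    linarith [hg'_le t (le_of_lt ht)]
  have := this self_mem_Ici (by norm_num : (1 : ℝ) ∈ Ici 0) zero_le_one
  simp only at this
  linarith

theorem nonneg_of_hasDerivAt_nonneg {θ θ' : ℝ → ℝ} (h0 : θ 0 = 0)
    (hθ : ∀ z, 0 ≤ z → HasDerivAt θ (θ' z) z) (hθ' : ∀ z, 0 ≤ z → 0 ≤ θ' z) {z : ℝ}
    (hz : 0 ≤ z) : 0 ≤ θ z := by
  have : MonotoneOn θ (Ici 0) := by
    refine monotoneOn_of_hasDerivWithinAt_nonneg (convex_Ici 0) (f' := θ')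
      (fun t ht => (hθ t ht).continuousAt.continuousWithinAt) (fun t ht => ?_) (fun t ht => ?_)
    all_goals rw [interior_Ici] at ht
    · exact (hθ t (le_of_lt ht)).hasDerivWithinAt
    · exact hθ' t (le_of_lt ht)
  exact h0 ▸ this self_mem_Ici hz hz

theorem norm_le_mul_sqrt_of_forall_nonneg {F : Type*} [NormedAddCommGroup F]
    [InnerProductSpace ℝ F] {g : F} {a r : ℝ} (hr : 0 < r)
    (h : ∀ u : F, 0 ≤ a + ⟪g, u⟫ / r + ‖u‖ ^ 2 / 2) : ‖g‖ ≤ r * √(2 * a) := by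
  have key := h (-r⁻¹ • g)
  rw [real_inner_smul_right, real_inner_self_eq_norm_sq, norm_smul, norm_neg, norm_inv,
    Real.norm_of_nonneg hr.le] at key
  have hsq : ‖g‖ ^ 2 ≤ r ^ 2 * (2 * a) := by
    field_simp at key
    nlinarith
  calc ‖g‖ = √(‖g‖ ^ 2) := (Real.sqrt_sq (norm_nonneg g)).symm
    _ ≤ √(r ^ 2 * (2 * a)) := Real.sqrt_le_sqrt hsq
    _ = r * √(2 * a) := by rw [Real.sqrt_mul (sq_nonneg r), Real.sqrt_sq hr.le]

theorem ContDiff.gradient {E : Type*} [NormedAddCommGroup E] [InnerProductSpace ℝ E]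
    [CompleteSpace E] {n : WithTop ℕ∞} {f : E → ℝ} (hf : ContDiff ℝ (n + 1) f) :
    ContDiff ℝ n (gradient f) :=
  (InnerProductSpace.toDual ℝ E).symm.contDiff.comp (hf.fderiv_right le_rfl)

section

variable {E : Type*} [NormedAddCommGroup E] [InnerProductSpace ℝ E]

theorem HasFDerivAt.hasDerivAt_add_smul {F : Type*} [NormedAddCommGroup F] [NormedSpace ℝ F]
    {f : E → F} {f' : E →L[ℝ] F} {w u : E} {t : ℝ} (hf : HasFDerivAt f f' (w + t • u)) :
    HasDerivAt (fun s : ℝ => f (w + s • u)) (f' u) t := by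
  simpa [Function.comp_def] using
    hf.comp_hasDerivAt t (((hasDerivAt_id t).smul_const u).const_add w)

theorem real_inner_apply_self_le (A : E →L[ℝ] E) (u : E) : ⟪A u, u⟫ ≤ ‖A‖ * ‖u‖ ^ 2 :=
  calc ⟪A u, u⟫ ≤ ‖A u‖ * ‖u‖ := real_inner_le_norm _ _
    _ ≤ ‖A‖ * ‖u‖ * ‖u‖ := by gcongr; exact A.le_opNorm u
    _ = ‖A‖ * ‖u‖ ^ 2 := by ring

variable [CompleteSpace E]

theorem comp_add_le_of_norm_fderiv_gradient_le {Φ : E → ℝ} (hΦ : ContDiff ℝ 2 Φ)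
    (hΦnonneg : ∀ u, 0 ≤ Φ u) {ρ : ℝ → ℝ} (hρpos : ∀ z : ℝ, 0 ≤ z → 0 < ρ z)
    (hρmono : MonotoneOn ρ (Ici 0)) (hρdiff : DifferentiableOn ℝ ρ (Ici 0))
    (hHess : ∀ u : E, ‖fderiv ℝ (gradient Φ) u‖ ≤ ρ (Φ u))
    {θ : ℝ → ℝ} (hθ' : ∀ z : ℝ, 0 ≤ z → HasDerivAt θ (1 / ρ z) z) (w u : E) :
    θ (Φ (w + u)) ≤ θ (Φ w) + ⟪gradient Φ w, u⟫ / ρ (Φ w) + ‖u‖ ^ 2 / 2 := by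
  have hΦd : Differentiable ℝ Φ := hΦ.differentiable two_ne_zero
  have hGd : Differentiable ℝ (gradient Φ) :=
    (ContDiff.gradient (n := 1) hΦ).differentiable one_ne_zero
  set c : ℝ → E := fun t => w + t • u
  set ρ' := derivWithin ρ (Ici 0)
  have hΦc (t : ℝ) : HasDerivAt (fun s => Φ (c s)) ⟪gradient Φ (c t), u⟫ t := by
    simpa using (hΦd (c t)).hasGradientAt.hasFDerivAt.hasDerivAt_add_smul
  have hGc (t : ℝ) : HasDerivAt (fun s => ⟪gradient Φ (c s), u⟫)
      ⟪fderiv ℝ (gradient Φ) (c t) u, u⟫ t := by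
    simpa using (hGd (c t)).hasFDerivAt.hasDerivAt_add_smul.inner ℝ (hasDerivAt_const t u)
  have hρc (t : ℝ) : HasDerivAt (fun s => ρ (Φ (c s)))
      (⟪gradient Φ (c t), u⟫ * ρ' (Φ (c t))) t := by
    simpa only [Function.comp_def, smul_eq_mul, mul_comm] using
      (hρdiff _ (hΦnonneg (c t))).hasDerivWithinAt.scomp_hasDerivAt t (hΦc t)
        fun s => hΦnonneg (c s)
  rw [show w + u = c 1 by simp [c], show w = c 0 by simp [c]]
  refine le_add_deriv_add_half_of_hasDerivAt_le (L := ‖u‖ ^ 2) (g := fun t => θ (Φ (c t)))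
    (g' := fun t => ⟪gradient Φ (c t), u⟫ / ρ (Φ (c t)))
    (g'' := fun t => ⟪fderiv ℝ (gradient Φ) (c t) u, u⟫ / ρ (Φ (c t))
      - ⟪gradient Φ (c t), u⟫ ^ 2 * ρ' (Φ (c t)) / ρ (Φ (c t)) ^ 2) (fun t => ?_) (fun t => ?_)
    (fun t => ?_)
  · exact ((hθ' _ (hΦnonneg (c t))).comp t (hΦc t)).congr_deriv (by ring)
  · have hρ := (hρpos _ (hΦnonneg (c t))).ne'
    exact ((hGc t).div (hρc t) hρ).congr_deriv (by field_simp)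
  · have hρ := hρpos _ (hΦnonneg (c t))
    have hHu : ⟪fderiv ℝ (gradient Φ) (c t) u, u⟫ / ρ (Φ (c t)) ≤ ‖u‖ ^ 2 := by
      rw [div_le_iff₀ hρ]
      calc ⟪fderiv ℝ (gradient Φ) (c t) u, u⟫ ≤ ‖fderiv ℝ (gradient Φ) (c t)‖ * ‖u‖ ^ 2 :=
            real_inner_apply_self_le _ u
        _ ≤ ‖u‖ ^ 2 * ρ (Φ (c t)) := by rw [mul_comm]; gcongr; exact hHess _
    have hρ'nonneg : 0 ≤ ρ' (Φ (c t)) := hρmono.derivWithin_nonneg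
    have : 0 ≤ ⟪gradient Φ (c t), u⟫ ^ 2 * ρ' (Φ (c t)) / ρ (Φ (c t)) ^ 2 := by positivity
    linarith

end

/-- One-sided smoothness alternative to Taylor expansion for self-bounded potentials,
and the resulting gradient bound. -/
theorem theta_one_sided_smooth_and_gradient_bound
    {E : Type*} [NormedAddCommGroup E] [InnerProductSpace ℝ E] [FiniteDimensional ℝ E]
    (Φ : E → ℝ) (hΦ : ContDiff ℝ 2 Φ) (hΦnonneg : ∀ u, 0 ≤ Φ u)
    (ρ : ℝ → ℝ) (hρpos : ∀ z : ℝ, 0 ≤ z → 0 < ρ z)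
    (hρmono : MonotoneOn ρ (Set.Ici 0)) (hρdiff : DifferentiableOn ℝ ρ (Set.Ici 0))
    (hHess : ∀ u : E, ‖fderiv ℝ (gradient Φ) u‖ ≤ ρ (Φ u))
    (θ : ℝ → ℝ) (hθ0 : θ 0 = 0)
    (hθ' : ∀ z : ℝ, 0 ≤ z → HasDerivAt θ (1 / ρ z) z) :
    (∀ w u : E,
      θ (Φ (w + u)) ≤ θ (Φ w) + ⟪gradient Φ w, u⟫ / ρ (Φ w) + ‖u‖ ^ 2 / 2) ∧
    (∀ w : E, ‖gradient Φ w‖ ≤ ρ (Φ w) * Real.sqrt (2 * θ (Φ w))) := by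
  have one_sided :=
    comp_add_le_of_norm_fderiv_gradient_le hΦ hΦnonneg hρpos hρmono hρdiff hHess hθ'
  have hθnonneg (z : ℝ) (hz : 0 ≤ z) : 0 ≤ θ z :=
    nonneg_of_hasDerivAt_nonneg hθ0 hθ' (fun z hz => (one_div_pos.2 (hρpos z hz)).le) hz
  refine ⟨one_sided, fun w => norm_le_mul_sqrt_of_forall_nonneg (hρpos _ (hΦnonneg w)) fun u => ?_⟩
  exact (hθnonneg _ (hΦnonneg (w + u))).trans (one_sided w u)
end

section
/- Let d be a positive integer and let γ be the standard Gaussian measure on ℝ^d (the d-fold product of the standard normal distribution on ℝ). Then for all vectors u, v ∈ ℝ^d, ∫ (⟨a, u⟩² − ⟨a, v⟩²)² dγ(a) = 3‖u‖⁴ + 3‖v‖⁴ − 2‖u‖²‖v‖² − 4⟨u, v⟩². In particular, when ‖v‖ = 1 this integral equals 4(‖u‖² − ⟨u, v⟩²) + 3(‖u‖² − 1)². -/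
/-!
Under `γ` each linear form `a ↦ ⟨a, w⟩` is `N(0, ‖w‖²)`, so its fourth moment is `3‖w‖⁴`, the
fourth derivative at `0` of its moment generating function `exp (‖w‖² t² / 2)`. Polarization,
`(x² - y²)² = 4/3 (x⁴ + y⁴) - 1/6 ((x + y)⁴ + (x - y)⁴)`, turns the loss into a combination of
fourth moments of the forms `⟨a, u⟩`, `⟨a, v⟩`, `⟨a, u ± v⟩`, and expanding `‖u ± v‖²` gives the
closed form.
-/

open MeasureTheory ProbabilityTheory
open scoped NNReal

lemma deriv_mul_exp_mul_sq_div_two (c : ℝ) {p p' q : ℝ → ℝ} (hp : ∀ t, HasDerivAt p (p' t) t)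
    (hq : ∀ t, p' t + c * t * p t = q t) :
    deriv (fun t => p t * Real.exp (c * t ^ 2 / 2)) = fun t => q t * Real.exp (c * t ^ 2 / 2) := by
  ext t
  have hexp : HasDerivAt (fun t => Real.exp (c * t ^ 2 / 2))
      (c * t * Real.exp (c * t ^ 2 / 2)) t := by
    convert ((hasDerivAt_pow 2 t).const_mul c |>.div_const 2).exp using 1
    ring
  refine ((hp t).mul hexp).deriv.trans ?_
  rw [← hq]
  ring

lemma iteratedDeriv_four_exp_mul_sq_div_two (c : ℝ) :
    iteratedDeriv 4 (fun t => Real.exp (c * t ^ 2 / 2)) 0 = 3 * c ^ 2 := by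
  calc iteratedDeriv 4 (fun t => Real.exp (c * t ^ 2 / 2)) 0
      = iteratedDeriv 4 (fun t => 1 * Real.exp (c * t ^ 2 / 2)) 0 := by simp only [one_mul]
    _ = iteratedDeriv 3 (fun t => c * t * Real.exp (c * t ^ 2 / 2)) 0 := by
      rw [iteratedDeriv_succ', deriv_mul_exp_mul_sq_div_two c (q := fun t => c * t)
        (fun t => hasDerivAt_const t 1) fun t => by ring]
    _ = iteratedDeriv 2 (fun t => (c + c ^ 2 * t ^ 2) * Real.exp (c * t ^ 2 / 2)) 0 := by
      rw [iteratedDeriv_succ', deriv_mul_exp_mul_sq_div_two c (p := fun t => c * t)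
        (q := fun t => c + c ^ 2 * t ^ 2) (fun t => (hasDerivAt_id t).const_mul c)
        fun t => by ring]
    _ = iteratedDeriv 1
          (fun t => (3 * c ^ 2 * t + c ^ 3 * t ^ 3) * Real.exp (c * t ^ 2 / 2)) 0 := by
      rw [iteratedDeriv_succ', deriv_mul_exp_mul_sq_div_two c (p := fun t => c + c ^ 2 * t ^ 2)
        (q := fun t => 3 * c ^ 2 * t + c ^ 3 * t ^ 3)
        (fun t => ((hasDerivAt_pow 2 t).const_mul (c ^ 2)).const_add c) fun t => by
          simp only [Nat.cast_ofNat, Nat.add_one_sub_one, pow_one]; ring]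
    _ = iteratedDeriv 0 (fun t => (3 * c ^ 2 + 6 * c ^ 3 * t ^ 2 + c ^ 4 * t ^ 4) *
          Real.exp (c * t ^ 2 / 2)) 0 := by
      rw [iteratedDeriv_succ', deriv_mul_exp_mul_sq_div_two c
        (p := fun t => 3 * c ^ 2 * t + c ^ 3 * t ^ 3)
        (q := fun t => 3 * c ^ 2 + 6 * c ^ 3 * t ^ 2 + c ^ 4 * t ^ 4)
        (fun t => ((hasDerivAt_id t).const_mul (3 * c ^ 2)).add
          ((hasDerivAt_pow 3 t).const_mul (c ^ 3))) fun t => by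
          simp only [Nat.cast_ofNat, Nat.add_one_sub_one, mul_one]; ring]
    _ = 3 * c ^ 2 := by simp

lemma integral_pow_four_gaussianReal (v : ℝ≥0) :
    ∫ x, x ^ 4 ∂gaussianReal 0 v = 3 * (v : ℝ) ^ 2 := by
  have h := iteratedDeriv_mgf_zero (X := id) (μ := gaussianReal 0 v)
    (by simp [integrableExpSet_id_gaussianReal]) 4
  simp only [mgf_id_gaussianReal, zero_mul, zero_add, iteratedDeriv_four_exp_mul_sq_div_two] at h
  simpa using h.symm

lemma integrable_pow_gaussianReal (μ : ℝ) (v : ℝ≥0) (n : ℕ) :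
    Integrable (fun x => x ^ n) (gaussianReal μ v) :=
  integrable_pow_of_mem_interior_integrableExpSet (X := id)
    (by simp [integrableExpSet_id_gaussianReal]) n

section StandardGaussianPi

variable {ι : Type*} [Fintype ι]

lemma map_pi_gaussianReal_sum_mul (w : ι → ℝ) :
    (Measure.pi fun _ : ι => gaussianReal 0 1).map (fun a => ∑ i, a i * w i) =
      gaussianReal 0 (∑ i, w i ^ 2).toNNReal := by
  set L : StrongDual ℝ (EuclideanSpace ℝ ι) := innerSL ℝ (WithLp.toLp 2 w)
  have hL : (fun a : ι → ℝ => ∑ i, a i * w i) = L ∘ WithLp.toLp 2 := by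
    ext a; simp [L, PiLp.inner_apply, mul_comm]
  rw [hL, ← Measure.map_map L.continuous.measurable (by fun_prop), map_pi_eq_stdGaussian,
    IsGaussian.map_eq_gaussianReal, integral_strongDual_stdGaussian, variance_dual_stdGaussian,
    innerSL_apply_norm, EuclideanSpace.real_norm_sq_eq]

lemma integrable_sum_mul_pow_pi_gaussianReal (w : ι → ℝ) (n : ℕ) :
    Integrable (fun a => (∑ i, a i * w i) ^ n) (Measure.pi fun _ : ι => gaussianReal 0 1) := by
  have h := integrable_pow_gaussianReal 0 (∑ i, w i ^ 2).toNNReal n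
  rwa [← map_pi_gaussianReal_sum_mul,
    integrable_map_measure (by fun_prop) (Measurable.aemeasurable (by fun_prop))] at h

lemma integral_sum_mul_pow_four_pi_gaussianReal (w : ι → ℝ) :
    ∫ a, (∑ i, a i * w i) ^ 4 ∂(Measure.pi fun _ : ι => gaussianReal 0 1) =
      3 * (∑ i, w i ^ 2) ^ 2 := by
  rw [← integral_map (f := fun x => x ^ 4) (Measurable.aemeasurable (by fun_prop)) (by fun_prop),
    map_pi_gaussianReal_sum_mul, integral_pow_four_gaussianReal,
    Real.coe_toNNReal _ (by positivity)]

lemma integral_sq_sub_sq_sq_pi_gaussianReal (u v : ι → ℝ) :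
    ∫ a, ((∑ i, a i * u i) ^ 2 - (∑ i, a i * v i) ^ 2) ^ 2
        ∂(Measure.pi fun _ : ι => gaussianReal 0 1) =
      3 * (∑ i, u i ^ 2) ^ 2 + 3 * (∑ i, v i ^ 2) ^ 2
        - 2 * (∑ i, u i ^ 2) * (∑ i, v i ^ 2) - 4 * (∑ i, u i * v i) ^ 2 := by
  have hI := integrable_sum_mul_pow_pi_gaussianReal (ι := ι) (n := 4)
  have polarization (a : ι → ℝ) : ((∑ i, a i * u i) ^ 2 - (∑ i, a i * v i) ^ 2) ^ 2 =
      4 / 3 * (∑ i, a i * u i) ^ 4 + 4 / 3 * (∑ i, a i * v i) ^ 4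
        - 1 / 6 * (∑ i, a i * (u + v) i) ^ 4 - 1 / 6 * (∑ i, a i * (u - v) i) ^ 4 := by
    simp only [Pi.add_apply, Pi.sub_apply, mul_add, mul_sub, Finset.sum_add_distrib,
      Finset.sum_sub_distrib]
    ring
  simp_rw [polarization]
  rw [integral_sub, integral_sub, integral_add, integral_const_mul, integral_const_mul,
    integral_const_mul, integral_const_mul]
  · simp only [integral_sum_mul_pow_four_pi_gaussianReal, Pi.add_apply, Pi.sub_apply, add_sq,
      sub_sq, Finset.sum_add_distrib, Finset.sum_sub_distrib, mul_assoc, ← Finset.mul_sum]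
    ring
  all_goals apply_rules [Integrable.sub, Integrable.add, Integrable.const_mul, hI]

end StandardGaussianPi

theorem gaussian_phase_retrieval_loss_general (d : ℕ) (u v : Fin d → ℝ) :
    (∫ a : Fin d → ℝ, ((∑ i, a i * u i) ^ 2 - (∑ i, a i * v i) ^ 2) ^ 2
        ∂(Measure.pi fun _ : Fin d => gaussianReal 0 1)) =
      3 * (∑ i, u i ^ 2) ^ 2 + 3 * (∑ i, v i ^ 2) ^ 2
        - 2 * (∑ i, u i ^ 2) * (∑ i, v i ^ 2) - 4 * (∑ i, u i * v i) ^ 2 ∧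
    ((∑ i, v i ^ 2) = 1 →
      (∫ a : Fin d → ℝ, ((∑ i, a i * u i) ^ 2 - (∑ i, a i * v i) ^ 2) ^ 2
          ∂(Measure.pi fun _ : Fin d => gaussianReal 0 1)) =
        4 * ((∑ i, u i ^ 2) - (∑ i, u i * v i) ^ 2)
          + 3 * ((∑ i, u i ^ 2) - 1) ^ 2) := by
  refine ⟨integral_sq_sub_sq_sq_pi_gaussianReal u v, fun hv => ?_⟩
  rw [integral_sq_sub_sq_sq_pi_gaussianReal, hv]
  ring

/-- Closed form of the phase-retrieval population loss under the standard Gaussian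
measure on `ℝ^d`, together with its specialization to a unit ground-truth vector. -/
theorem gaussian_phase_retrieval_loss (d : ℕ) (hd : 0 < d) (u v : Fin d → ℝ) :
    (∫ a : Fin d → ℝ, ((∑ i, a i * u i) ^ 2 - (∑ i, a i * v i) ^ 2) ^ 2
        ∂(Measure.pi fun _ : Fin d => gaussianReal 0 1)) =
      3 * (∑ i, u i ^ 2) ^ 2 + 3 * (∑ i, v i ^ 2) ^ 2
        - 2 * (∑ i, u i ^ 2) * (∑ i, v i ^ 2) - 4 * (∑ i, u i * v i) ^ 2 ∧
    ((∑ i, v i ^ 2) = 1 →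
      (∫ a : Fin d → ℝ, ((∑ i, a i * u i) ^ 2 - (∑ i, a i * v i) ^ 2) ^ 2
          ∂(Measure.pi fun _ : Fin d => gaussianReal 0 1)) =
        4 * ((∑ i, u i ^ 2) - (∑ i, u i * v i) ^ 2)
          + 3 * ((∑ i, u i ^ 2) - 1) ^ 2) :=
  gaussian_phase_retrieval_loss_general d u v
end

section
/- Let E be a finite-dimensional real inner product space and w* ∈ E with ‖w*‖ = 1, and define F : E → ℝ by F(u) = ‖u‖² − ⟨u, w*⟩² + (3/4)(‖u‖² − 1)². Then for every u ∈ E: (1) the gradient of F at u equals 2u − 2⟨u, w*⟩w* + 3(‖u‖² − 1)u; (2) ⟨w*, ∇F(u)⟩ = 3(‖u‖² − 1)⟨u, w*⟩; and (3) ‖∇F(u)‖² = 12‖u‖²·F(u) − 8(‖u‖² − ⟨u, w*⟩²). -/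
/-!
The gradient is computed termwise from `D(‖u‖²) = 2⟪u, ·⟫` and `D(⟪u, w*⟫²) = 2⟪u, w*⟫⟪w*, ·⟫`.
Writing it as `∇F(u) = (3‖u‖² - 1) u - 2⟪u, w*⟫ w*`, the other two identities are expansions
of an inner product and of a squared norm, using `‖w*‖ = 1`.
-/

open RealInnerProductSpace

section PhaseRetrieval

variable {E : Type*} [NormedAddCommGroup E] [InnerProductSpace ℝ E]

noncomputable def phaseRetrievalLoss (w u : E) : ℝ :=
  ‖u‖ ^ 2 - ⟪u, w⟫ ^ 2 + (3 / 4) * (‖u‖ ^ 2 - 1) ^ 2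

noncomputable def phaseRetrievalGrad (w u : E) : E :=
  (2 : ℝ) • u - (2 * ⟪u, w⟫) • w + (3 * (‖u‖ ^ 2 - 1)) • u

theorem phaseRetrievalGrad_eq (w u : E) :
    phaseRetrievalGrad w u = (3 * ‖u‖ ^ 2 - 1) • u - (2 * ⟪u, w⟫) • w := by
  rw [phaseRetrievalGrad, sub_add_eq_add_sub, ← add_smul]
  ring_nf

theorem hasGradientAt_phaseRetrievalLoss [CompleteSpace E] (w u : E) :
    HasGradientAt (phaseRetrievalLoss w) (phaseRetrievalGrad w u) u := by
  have hnorm : HasFDerivAt (‖·‖ ^ 2) (2 • innerSL ℝ u) u :=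
    (hasStrictFDerivAt_norm_sq u).hasFDerivAt
  have hinner : HasFDerivAt (⟪·, w⟫) (innerSL ℝ w) u := by
    convert (innerSL ℝ w).hasFDerivAt using 1
    exact funext fun x => real_inner_comm w x
  rw [hasGradientAt_iff_hasFDerivAt]
  refine ((hnorm.sub (hinner.pow 2)).add
    (((hnorm.sub_const 1).pow 2).const_mul (3 / 4))).congr_fderiv ?_
  ext v
  simp only [phaseRetrievalGrad, InnerProductSpace.toDual_apply_apply, inner_add_left,
    inner_sub_left, real_inner_smul_left, add_apply, sub_apply, smul_apply, coe_innerSL_apply,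
    Nat.add_one_sub_one, pow_one, nsmul_eq_mul, Nat.cast_ofNat, smul_eq_mul]
  ring

variable {w : E}

theorem inner_phaseRetrievalGrad (hw : ‖w‖ = 1) (u : E) :
    ⟪w, phaseRetrievalGrad w u⟫ = 3 * (‖u‖ ^ 2 - 1) * ⟪u, w⟫ := by
  rw [phaseRetrievalGrad_eq, inner_sub_right, inner_smul_right, inner_smul_right,
    real_inner_self_eq_norm_sq, hw, real_inner_comm]
  ring

theorem norm_phaseRetrievalGrad_sq (hw : ‖w‖ = 1) (u : E) :
    ‖phaseRetrievalGrad w u‖ ^ 2 =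
      12 * ‖u‖ ^ 2 * phaseRetrievalLoss w u - 8 * (‖u‖ ^ 2 - ⟪u, w⟫ ^ 2) := by
  rw [phaseRetrievalGrad_eq, norm_sub_sq_real, norm_smul, norm_smul, inner_smul_left,
    inner_smul_right, hw, phaseRetrievalLoss]
  simp only [Real.norm_eq_abs, mul_pow, sq_abs, conj_trivial]
  ring

end PhaseRetrieval

/-- Gradient identities for the phase-retrieval population loss. -/
theorem phase_retrieval_gradient_identities
    {E : Type*} [NormedAddCommGroup E] [InnerProductSpace ℝ E] [FiniteDimensional ℝ E]
    (wstar : E) (hws : ‖wstar‖ = 1)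
    (F : E → ℝ)
    (hFdef : ∀ u : E, F u = ‖u‖ ^ 2 - ⟪u, wstar⟫ ^ 2 + (3 / 4) * (‖u‖ ^ 2 - 1) ^ 2) :
    ∀ u : E,
      gradient F u =
        (2 : ℝ) • u - (2 * ⟪u, wstar⟫) • wstar + (3 * (‖u‖ ^ 2 - 1)) • u ∧
      ⟪wstar, gradient F u⟫ = 3 * (‖u‖ ^ 2 - 1) * ⟪u, wstar⟫ ∧
      ‖gradient F u‖ ^ 2 = 12 * ‖u‖ ^ 2 * F u - 8 * (‖u‖ ^ 2 - ⟪u, wstar⟫ ^ 2) := by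
  obtain rfl : F = phaseRetrievalLoss wstar := funext hFdef
  intro u
  rw [(hasGradientAt_phaseRetrievalLoss wstar u).gradient]
  exact ⟨rfl, inner_phaseRetrievalGrad hws u, norm_phaseRetrievalGrad_sq hws u⟩
end

section
/- Let M and W be real symmetric d×d matrices with W positive definite, and let μ ≥ 0 be such that W² − μ·I is positive semidefinite (i.e. μ is at most the smallest eigenvalue of W²). Then, writing A = W² − M and ‖·‖_F for the Frobenius norm, the gradient of the matrix-square-root objective F(W) = ‖W² − M‖_F², which equals 2(AW + WA), satisfies ‖2(AW + WA)‖_F² ≥ 16·μ·‖W² − M‖_F². -/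
open Matrix
open scoped MatrixOrder

/-- The Frobenius norm of a real square matrix, `‖B‖_F = √(trace (Bᵀ B))`. -/
noncomputable def frobNorm {d : ℕ} (B : Matrix (Fin d) (Fin d) ℝ) : ℝ :=
  Real.sqrt (Matrix.trace (B.transpose * B))

section Aux

variable {d : ℕ}

lemma auxTraceNonneg {P : Matrix (Fin d) (Fin d) ℝ} (hP : P.PosSemidef) :
    0 ≤ P.trace := by
  rw [Matrix.trace]
  refine Finset.sum_nonneg fun i _ => ?_
  have h := hP.dotProduct_mulVec_nonneg (Pi.single i 1)
  simpa [Matrix.mulVec_single, single_dotProduct, Matrix.diag_apply] using h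

lemma auxFrobSq (B : Matrix (Fin d) (Fin d) ℝ) :
    frobNorm B ^ 2 = (B.transpose * B).trace := by
  have h : 0 ≤ (B.transpose * B).trace := by
    rw [Matrix.trace]
    refine Finset.sum_nonneg fun i _ => ?_
    rw [Matrix.diag_apply, Matrix.mul_apply]
    exact Finset.sum_nonneg fun j _ => by
      rw [Matrix.transpose_apply]; exact mul_self_nonneg _
  rw [frobNorm, Real.sq_sqrt h]

/-- shift: if all eigenvalues of a posdef `W` are `≥ ν` then `W - ν•1` is psd. -/
lemma auxShift {W : Matrix (Fin d) (Fin d) ℝ} (hWpd : W.PosDef) {ν : ℝ}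
    (hν : ∀ i, ν ≤ hWpd.1.eigenvalues i) :
    (W - ν • (1 : Matrix (Fin d) (Fin d) ℝ)).PosSemidef := by
  have hW := hWpd.1
  have hU : (hW.eigenvectorUnitary : Matrix (Fin d) (Fin d) ℝ) *
      star (hW.eigenvectorUnitary : Matrix (Fin d) (Fin d) ℝ) = 1 :=
    (Matrix.mem_unitaryGroup_iff).mp hW.eigenvectorUnitary.2
  have key : W - ν • (1 : Matrix (Fin d) (Fin d) ℝ) =
      (hW.eigenvectorUnitary : Matrix (Fin d) (Fin d) ℝ) *
        (Matrix.diagonal (fun i => hW.eigenvalues i - ν)) *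
        ((hW.eigenvectorUnitary : Matrix (Fin d) (Fin d) ℝ))ᴴ := by
    have hone : ν • (1 : Matrix (Fin d) (Fin d) ℝ) =
        (hW.eigenvectorUnitary : Matrix (Fin d) (Fin d) ℝ) *
          (ν • (1 : Matrix (Fin d) (Fin d) ℝ)) *
          star (hW.eigenvectorUnitary : Matrix (Fin d) (Fin d) ℝ) := by
      rw [Matrix.mul_smul, mul_one, Matrix.smul_mul, hU]
    nth_rewrite 1 [hW.spectral_theorem, hone]
    rw [Unitary.conjStarAlgAut_apply, Matrix.star_eq_conjTranspose, ← Matrix.sub_mul, ← Matrix.mul_sub]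
    congr 2
    rw [← Matrix.diagonal_one, ← Matrix.diagonal_smul, Matrix.diagonal_sub]
    congr 1
    funext i
    simp
  rw [key]
  exact (Matrix.PosSemidef.diagonal (fun i => sub_nonneg.2 (hν i))).mul_mul_conjTranspose_same _


lemma auxEigLB {W : Matrix (Fin d) (Fin d) ℝ} (hWpd : W.PosDef)
    {μ : ℝ} (hμ : 0 ≤ μ)
    (hμle : (W ^ 2 - μ • (1 : Matrix (Fin d) (Fin d) ℝ)).PosSemidef) (i : Fin d) :
    Real.sqrt μ ≤ hWpd.1.eigenvalues i := by
  have hW := hWpd.1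
  set lam := hW.eigenvalues i with hlam
  have hpos : 0 < lam := hWpd.eigenvalues_pos i
  set v : Fin d → ℝ := ⇑(hW.eigenvectorBasis i) with hvdef
  have hv : W *ᵥ v = lam • v := hW.mulVec_eigenvectorBasis i
  have hv2 : (W ^ 2) *ᵥ v = (lam ^ 2) • v := by
    rw [pow_two, ← Matrix.mulVec_mulVec, hv, Matrix.mulVec_smul, hv, smul_smul, ← pow_two]
  have hvv : dotProduct v v = 1 := by
    have h1 : ‖hW.eigenvectorBasis i‖ = 1 := hW.eigenvectorBasis.orthonormal.1 i
    have h2 : (inner ℝ (hW.eigenvectorBasis i) (hW.eigenvectorBasis i) : ℝ) = 1 := by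
      rw [real_inner_self_eq_norm_sq, h1]; norm_num
    rw [EuclideanSpace.inner_eq_star_dotProduct] at h2
    simpa using h2
  have h := hμle.dotProduct_mulVec_nonneg v
  rw [Matrix.sub_mulVec, hv2, Matrix.smul_mulVec, Matrix.one_mulVec] at h
  rw [star_trivial, ← sub_smul, dotProduct_smul, hvv] at h
  have hsq : μ ≤ lam ^ 2 := by simpa using h
  calc Real.sqrt μ ≤ Real.sqrt (lam ^ 2) := Real.sqrt_le_sqrt hsq
    _ = lam := by rw [Real.sqrt_sq hpos.le]

end Aux

/-- Lower bound on the gradient of the matrix-square-root objective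
`F(W) = ‖W² − M‖_F²` in terms of the smallest eigenvalue of `W²`. -/
theorem matrix_sqrt_gradient_lower_bound {d : ℕ}
    (M W : Matrix (Fin d) (Fin d) ℝ) (hM : M.IsSymm) (hW : W.IsSymm)
    (hWpd : W.PosDef)
    (μ : ℝ) (hμ : 0 ≤ μ)
    (hμle : (W ^ 2 - μ • (1 : Matrix (Fin d) (Fin d) ℝ)).PosSemidef) :
    16 * μ * frobNorm (W ^ 2 - M) ^ 2 ≤
      frobNorm ((2 : ℝ) • ((W ^ 2 - M) * W + W * (W ^ 2 - M))) ^ 2 := by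
  obtain ⟨A, hAdef⟩ : ∃ X, X = W ^ 2 - M := ⟨_, rfl⟩
  rw [← hAdef]
  have hWs : Wᵀ = W := hW.eq
  have hAs : Aᵀ = A := by
    rw [hAdef, Matrix.transpose_sub, Matrix.transpose_pow, hWs, hM.eq]
  have hAct : Aᴴ = A := by
    rw [Matrix.conjTranspose_eq_transpose_of_trivial, hAs]
  set ν := Real.sqrt μ with hνdef
  have hν0 : 0 ≤ ν := Real.sqrt_nonneg μ
  have hνν : ν * ν = μ := Real.mul_self_sqrt hμ
  have hshift : (W - ν • (1 : Matrix (Fin d) (Fin d) ℝ)).PosSemidef :=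
    auxShift hWpd (fun i => auxEigLB hWpd hμ hμle i)
  obtain ⟨R, hRdef⟩ : ∃ X, X = CFC.sqrt W := ⟨_, rfl⟩
  have hRR : R * R = W := by rw [hRdef]; exact CFC.sqrt_mul_sqrt_self W hWpd.posSemidef.nonneg
  have hRct : Rᴴ = R := by rw [hRdef]; exact (CFC.sqrt_nonneg W).posSemidef.1
  have hRpsd : R.PosSemidef := by rw [hRdef]; exact (CFC.sqrt_nonneg W).posSemidef
  -- (2) Tsq ≥ μ TA
  have h2 : μ * ((A * A).trace) ≤ ((A * A) * (W * W)).trace := by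
    have hpsd := hμle.conjTranspose_mul_mul_same A
    rw [hAct] at hpsd
    have h := auxTraceNonneg hpsd
    have e : (A * (W ^ 2 - μ • (1 : Matrix (Fin d) (Fin d) ℝ)) * A).trace
        = ((A * A) * (W * W)).trace - μ * ((A * A).trace) := by
      rw [Matrix.mul_sub, Matrix.sub_mul, Matrix.trace_sub]
      have eA : (A * (W ^ 2) * A).trace = ((A * A) * (W * W)).trace := by
        rw [Matrix.trace_mul_comm, ← Matrix.mul_assoc, pow_two]
      have eB : (A * (μ • (1 : Matrix (Fin d) (Fin d) ℝ)) * A).trace = μ * ((A * A).trace) := by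
        rw [Matrix.mul_smul, mul_one, Matrix.smul_mul, Matrix.trace_smul, smul_eq_mul]
      rw [eA, eB]
    rw [e] at h; linarith
  -- (3) TAW ≥ ν TA
  have h3 : ν * ((A * A).trace) ≤ ((A * A) * W).trace := by
    have hpsd := hshift.conjTranspose_mul_mul_same A
    rw [hAct] at hpsd
    have h := auxTraceNonneg hpsd
    have e : (A * (W - ν • (1 : Matrix (Fin d) (Fin d) ℝ)) * A).trace
        = ((A * A) * W).trace - ν * ((A * A).trace) := by
      rw [Matrix.mul_sub, Matrix.sub_mul, Matrix.trace_sub]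
      have eA : (A * W * A).trace = ((A * A) * W).trace := by
        rw [Matrix.trace_mul_comm, ← Matrix.mul_assoc]
      have eB : (A * (ν • (1 : Matrix (Fin d) (Fin d) ℝ)) * A).trace = ν * ((A * A).trace) := by
        rw [Matrix.mul_smul, mul_one, Matrix.smul_mul, Matrix.trace_smul, smul_eq_mul]
      rw [eA, eB]
    rw [e] at h; linarith
  -- (4) T1 ≥ ν TAW
  have h4 : ν * (((A * A) * W).trace) ≤ ((A * W) * (A * W)).trace := by
    have hpsd := hshift.conjTranspose_mul_mul_same (A * R)
    rw [Matrix.conjTranspose_mul, hAct, hRct] at hpsd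
    have h := auxTraceNonneg hpsd
    have e : ((R * A) * (W - ν • (1 : Matrix (Fin d) (Fin d) ℝ)) * (A * R)).trace
        = ((A * W) * (A * W)).trace - ν * (((A * A) * W).trace) := by
      rw [Matrix.mul_sub, Matrix.sub_mul, Matrix.trace_sub]
      have eA : ((R * A) * W * (A * R)).trace = ((A * W) * (A * W)).trace := by
        rw [Matrix.trace_mul_comm]
        have : (A * R) * ((R * A) * W) = (A * W) * (A * W) := by
          simp only [Matrix.mul_assoc]
          rw [← Matrix.mul_assoc R R, hRR]
        rw [this]
      have eB : ((R * A) * (ν • (1 : Matrix (Fin d) (Fin d) ℝ)) * (A * R)).trace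
          = ν * (((A * A) * W).trace) := by
        rw [Matrix.mul_smul, mul_one, Matrix.smul_mul, Matrix.trace_smul, smul_eq_mul]
        congr 1
        rw [Matrix.trace_mul_comm]
        have : (A * R) * (R * A) = (A * W) * A := by
          simp only [Matrix.mul_assoc]
          rw [← Matrix.mul_assoc R R, hRR]
        rw [this, Matrix.trace_mul_comm, ← Matrix.mul_assoc]
      rw [eA, eB]
    rw [e] at h; linarith
  -- trace expansion of the gradient norm
  have hfrobA : frobNorm A ^ 2 = (A * A).trace := by rw [auxFrobSq, hAs]
  have hG : frobNorm ((2 : ℝ) • (A * W + W * A)) ^ 2 = 8 * ((A * W) * (A * W)).trace + 8 * ((A * A) * (W * W)).trace := by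
    rw [auxFrobSq]
    have hGt : (A * W + W * A)ᵀ = A * W + W * A := by
      rw [Matrix.transpose_add, Matrix.transpose_mul, Matrix.transpose_mul, hWs, hAs,
        add_comm]
    rw [Matrix.transpose_smul, hGt, Matrix.smul_mul, Matrix.mul_smul, smul_smul,
      Matrix.trace_smul, smul_eq_mul]
    have hexp : ((A * W + W * A) * (A * W + W * A)).trace
        = 2 * ((A * W) * (A * W)).trace + 2 * ((A * A) * (W * W)).trace := by
      rw [Matrix.add_mul, Matrix.mul_add, Matrix.mul_add, Matrix.trace_add,
        Matrix.trace_add, Matrix.trace_add]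
      have e2 : ((A * W) * (W * A)).trace = ((A * A) * (W * W)).trace := by
        rw [Matrix.trace_mul_comm]
        have : (W * A) * (A * W) = W * ((A * A) * W) := by
          simp only [Matrix.mul_assoc]
        rw [this, Matrix.trace_mul_comm, ← Matrix.mul_assoc, Matrix.trace_mul_comm,
          ← Matrix.mul_assoc]
      have e3 : ((W * A) * (A * W)).trace = ((A * A) * (W * W)).trace := by
        rw [Matrix.trace_mul_comm] at e2 ⊢
        rw [← e2, Matrix.trace_mul_comm]
      have e4 : ((W * A) * (W * A)).trace = ((A * W) * (A * W)).trace := by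
        have h1 : (W * A) * (W * A) = W * (A * (W * A)) := by
          simp only [Matrix.mul_assoc]
        have h2 : (A * (W * A)) * W = (A * W) * (A * W) := by
          simp only [Matrix.mul_assoc]
        rw [h1, Matrix.trace_mul_comm, h2]
      rw [e2, e3, e4]; ring
    rw [hexp]; ring
  rw [hfrobA, hG]
  nlinarith [mul_le_mul_of_nonneg_left h3 hν0]
end
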